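/- arXiv:2105.00761 — 8 statements merged into one kernel-verified Lean document; each statement's English description precedes it below -/
import Mathlib

section
/- Let 𝔽 be a finite field with exactly n elements, let A ∈ 𝔽^{a×b} be a matrix, and let v ∈ 𝔽^a lie in the image of the linear map w ↦ A·w. Then for every index i ∈ [b] such that the i-th standard unit vector e_i does not lie in the span of the rows of A, and every y ∈ 𝔽, the probability over a uniformly random f ∈ 𝔽^b that f_i = y, conditioned on A·f = v, is exactly 1/n. Equivalently, n · |{f ∈ 𝔽^b : A·f = v and f_i = y}| = |{f ∈ 𝔽^b : A·f = v}|. -/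
/-!
Since `e_i` is not in the row span of `A`, a linear functional vanishing on the rows but not on
`e_i` yields a kernel vector `g` of `A` with `g i = 1`. Translating by multiples of `g` preserves
`A f = v` and shifts `f i` arbitrarily, so `f ↦ (f i, f + (y - f i) • g)` identifies the
solutions of `A f = v` with `𝔽 × {solutions with f i = y}`.
-/

open Matrix Submodule

theorem Matrix.exists_mulVec_eq_zero_apply_eq_one_of_single_notMem_span {K m n : Type*}
    [Field K] [Fintype n] [DecidableEq n] (A : Matrix m n K) {i : n}
    (hi : Pi.single i 1 ∉ span K (Set.range A)) :
    ∃ g : n → K, A *ᵥ g = 0 ∧ g i = 1 := by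
  obtain ⟨f, hfi, hrows⟩ := exists_le_ker_of_notMem hi
  set g : n → K := fun j => f (Pi.single j 1)
  have hf (x : n → K) : x ⬝ᵥ g = f x := by
    conv_rhs => rw [pi_eq_sum_univ' x]
    simp [dotProduct, g]
  refine ⟨(g i)⁻¹ • g, ?_, inv_mul_cancel₀ hfi⟩
  ext r
  rw [mulVec_smul, Pi.smul_apply, Pi.zero_apply, mulVec, hf]
  exact smul_eq_zero_of_right _ (hrows (subset_span ⟨r, rfl⟩))

namespace LinearMap

variable {R V W : Type*} [Ring R] [AddCommGroup V] [Module R V] [AddCommMonoid W] [Module R W]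
  {L : V →ₗ[R] W} {φ : V →ₗ[R] R} {g : V}

def fiberEquivProdSlice (hg : L g = 0) (hφg : φ g = 1) (v : W) (y : R) :
    {f : V // L f = v} ≃ R × {f : V // L f = v ∧ φ f = y} where
  toFun f := ⟨φ f, f + (y - φ f) • g, by simp [hg, f.2], by simp [hφg]⟩
  invFun p := ⟨p.2 + (p.1 - y) • g, by simp [hg, p.2.2.1]⟩
  left_inv f := by ext; simp [add_assoc, ← add_smul]
  right_inv p := by
    obtain ⟨c, f, hLf, hφf⟩ := p
    ext <;> simp [hφg, hφf, add_assoc, ← add_smul]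

theorem card_fiber_eq_card_mul_card_slice (hg : L g = 0) (hφg : φ g = 1) (v : W) (y : R) :
    Nat.card {f : V // L f = v} = Nat.card R * Nat.card {f : V // L f = v ∧ φ f = y} := by
  rw [Nat.card_congr (fiberEquivProdSlice hg hφg v y), Nat.card_prod]

end LinearMap

theorem stmt_0_general {𝔽 : Type} [Field 𝔽] [Fintype 𝔽] (n a b : ℕ)
    (hn : Fintype.card 𝔽 = n)
    (A : Matrix (Fin a) (Fin b) 𝔽) (v : Fin a → 𝔽)
    (i : Fin b)
    (hi : (Pi.single i (1 : 𝔽) : Fin b → 𝔽) ∉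
      Submodule.span 𝔽 (Set.range fun r : Fin a => A r))
    (y : 𝔽) :
    n * Nat.card {f : Fin b → 𝔽 // A.mulVec f = v ∧ f i = y}
      = Nat.card {f : Fin b → 𝔽 // A.mulVec f = v} := by
  obtain ⟨g, hg, hgi⟩ := A.exists_mulVec_eq_zero_apply_eq_one_of_single_notMem_span hi
  rw [← hn, ← Nat.card_eq_fintype_card]
  exact (LinearMap.card_fiber_eq_card_mul_card_slice (L := A.mulVecLin) (φ := LinearMap.proj i)
    hg hgi v y).symm

/-- Let `𝔽` be a finite field with exactly `n` elements, `A` an `a × b`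
matrix over `𝔽`, and `v` in the image of `w ↦ A ⬝ w`. If the `i`-th standard unit vector is
not in the row span of `A`, then for every `y`, conditioned on `A ⬝ f = v`, a uniformly
random `f ∈ 𝔽^b` satisfies `f i = y` with probability exactly `1/n`; equivalently,
`n * |{f : A ⬝ f = v ∧ f i = y}| = |{f : A ⬝ f = v}|`. -/
theorem stmt_0 {𝔽 : Type} [Field 𝔽] [Fintype 𝔽] (n a b : ℕ)
    (hn : Fintype.card 𝔽 = n)
    (A : Matrix (Fin a) (Fin b) 𝔽) (v : Fin a → 𝔽)
    (hv : ∃ w : Fin b → 𝔽, A.mulVec w = v)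
    (i : Fin b)
    (hi : (Pi.single i (1 : 𝔽) : Fin b → 𝔽) ∉
      Submodule.span 𝔽 (Set.range fun r : Fin a => A r))
    (y : 𝔽) :
    n * Nat.card {f : Fin b → 𝔽 // A.mulVec f = v ∧ f i = y}
      = Nat.card {f : Fin b → 𝔽 // A.mulVec f = v} :=
  stmt_0_general n a b hn A v i hi y
end

section
/- Let 𝔽 be a finite field and let n, ℓ, c ∈ ℕ. For every matrix A ∈ 𝔽^{ℓ×n} there exists a set S_A ⊆ [n] with |S_A| ≤ ℓ such that for every matrix B ∈ 𝔽^{c×n} there exists a set S_B ⊆ [n] with |S_B| ≤ c satisfying E(stack(A,B)) ⊆ S_A ∪ S_B, where stack(A,B) ∈ 𝔽^{(ℓ+c)×n} is the matrix whose rows are the rows of A followed by the rows of B. -/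
/-! A finite-dimensional space `R` of vectors is determined by at most `dim R` coordinates:
pick a coordinate on which some vector of `R` is nonzero and recurse into the subspace where it
vanishes. Let `S_A` be such a set for the row space `R` of `A`, and `W` the row space of `B`.
If `e_j ∈ R + W` for every `j` in a set `T` disjoint from `S_A`, then `span {e_j | j ∈ T}` meets
`R` trivially, its vectors vanishing on `S_A`; hence `|T| ≤ dim W ≤ c`. -/

open Module Submodule

variable {K ι : Type*} [DivisionRing K]

namespace Submodule

def IsDeterminedBy (R : Submodule K (ι → K)) (S : Set ι) : Prop :=
  ∀ v ∈ R, (∀ j ∈ S, v j = 0) → v = 0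

theorem exists_isDeterminedBy_card_le_finrank (R : Submodule K (ι → K))
    [FiniteDimensional K R] :
    ∃ S : Finset ι, S.card ≤ finrank K R ∧ R.IsDeterminedBy S := by
  classical
  induction h : finrank K R using Nat.strong_induction_on generalizing R with
  | _ k ih =>
    rcases eq_or_ne R ⊥ with rfl | hR
    · exact ⟨∅, Nat.zero_le _, fun v hv _ => (mem_bot K).1 hv⟩
    obtain ⟨v, hvR, hv⟩ := exists_mem_ne_zero_of_ne_bot hR
    obtain ⟨j, hj⟩ := Function.ne_iff.1 hv
    let R' := R ⊓ LinearMap.ker (LinearMap.proj j : (ι → K) →ₗ[K] K)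
    have hlt : finrank K R' < k :=
      h ▸ finrank_lt_finrank_of_lt (inf_le_left.lt_of_ne fun hR' => hj (hR' ▸ hvR).2)
    obtain ⟨S, hS, hSR'⟩ := ih _ hlt R' rfl
    refine ⟨insert j S, (S.card_insert_le j).trans (by omega), fun w hw hw0 => ?_⟩
    exact hSR' w ⟨hw, hw0 j (S.mem_insert_self j)⟩ fun i hi => hw0 i (S.mem_insert_of_mem hi)

theorem finrank_le_of_disjoint_of_le_sup {V : Type*} [AddCommGroup V] [Module K V]
    {U R W : Submodule K V} [FiniteDimensional K U] [FiniteDimensional K R]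
    [FiniteDimensional K W] (hUR : Disjoint U R) (hU : U ≤ R ⊔ W) :
    finrank K U ≤ finrank K W := by
  have hsup := finrank_sup_add_finrank_inf_eq U R
  rw [hUR.eq_bot, finrank_bot, add_zero] at hsup
  have := finrank_mono (sup_le hU le_sup_left)
  have := finrank_add_le_finrank_add_finrank R W
  omega

theorem apply_eq_zero_of_mem_span_single [DecidableEq ι] {T : Set ι} {v : ι → K}
    (hv : v ∈ span K (Set.range fun j : T => (Pi.single (j : ι) 1 : ι → K))) {i : ι}
    (hi : i ∉ T) : v i = 0 := by
  induction hv using span_induction with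
  | mem x hx =>
    obtain ⟨j, rfl⟩ := hx
    exact Pi.single_eq_of_ne (by rintro rfl; exact hi j.2) 1
  | zero => rfl
  | add x y _ _ hx hy => simp [hx, hy]
  | smul a x _ hx => simp [hx]

theorem card_le_finrank_of_isDeterminedBy [DecidableEq ι] {R W : Submodule K (ι → K)}
    [FiniteDimensional K R] [FiniteDimensional K W] {S T : Finset ι}
    (hR : R.IsDeterminedBy S) (hST : Disjoint S T) (hT : ∀ j ∈ T, Pi.single j 1 ∈ R ⊔ W) :
    T.card ≤ finrank K W := by
  let e : T → ι → K := fun j => Pi.single (j : ι) 1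
  have he : LinearIndependent K e :=
    (Pi.linearIndependent_single_one ι K).comp _ Subtype.val_injective
  have := FiniteDimensional.span_of_finite K (Set.finite_range e)
  rw [← Fintype.card_coe, ← finrank_span_eq_card he]
  refine finrank_le_of_disjoint_of_le_sup (R := R) ?_ ?_
  · rw [disjoint_def]
    intro v hvU hvR
    exact hR v hvR fun i hi =>
      apply_eq_zero_of_mem_span_single hvU (Finset.disjoint_left.1 hST hi)
  · rw [span_le, Set.range_subset_iff]
    exact fun j => hT j j.2

end Submodule

/-- For every `ℓ × n` matrix `A` over a field `𝔽` there is a set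
`S_A ⊆ [n]` of size at most `ℓ` such that for every `c × n` matrix `B` there is a set
`S_B ⊆ [n]` of size at most `c` with `E(stack(A,B)) ⊆ S_A ∪ S_B`, where `E(M)` is the set
of indices `j` whose standard unit vector `e_j` lies in the span of the rows of `M`
(the rows of `stack(A,B)` being the rows of `A` followed by the rows of `B`). -/
theorem stmt_1 {𝔽 : Type} [Field 𝔽] (n ℓ c : ℕ)
    (A : Matrix (Fin ℓ) (Fin n) 𝔽) :
    ∃ SA : Finset (Fin n), SA.card ≤ ℓ ∧
      ∀ B : Matrix (Fin c) (Fin n) 𝔽, ∃ SB : Finset (Fin n), SB.card ≤ c ∧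
        ∀ j : Fin n,
          (Pi.single j (1 : 𝔽) : Fin n → 𝔽) ∈
            Submodule.span 𝔽
              ((Set.range fun r : Fin ℓ => A r) ∪ (Set.range fun r : Fin c => B r)) →
          j ∈ SA ∪ SB := by
  classical
  set R := span 𝔽 (Set.range fun r : Fin ℓ => A r)
  obtain ⟨SA, hSA, hRSA⟩ := R.exists_isDeterminedBy_card_le_finrank
  refine ⟨SA, hSA.trans ((finrank_range_le_card _).trans_eq (Fintype.card_fin ℓ)),
    fun B => ?_⟩
  set W := span 𝔽 (Set.range fun r : Fin c => B r)
  set SB := Finset.univ.filter fun j => Pi.single j 1 ∈ R ⊔ W ∧ j ∉ SA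
  refine ⟨SB, ?_, fun j hj => ?_⟩
  · have hdisj : Disjoint SA SB :=
      Finset.disjoint_right.2 fun j hj => (Finset.mem_filter.1 hj).2.2
    have hsingle : ∀ j ∈ SB, Pi.single j 1 ∈ R ⊔ W :=
      fun j hj => (Finset.mem_filter.1 hj).2.1
    exact (card_le_finrank_of_isDeterminedBy hRSA hdisj hsingle).trans
      ((finrank_range_le_card _).trans_eq (Fintype.card_fin c))
  · rw [span_union] at hj
    by_cases hjSA : j ∈ SA
    · exact Finset.mem_union_left _ hjSA
    · exact Finset.mem_union_right _ (Finset.mem_filter.2 ⟨Finset.mem_univ j, hj, hjSA⟩)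
end

section
/- Let n, c ∈ ℕ with c ≥ 1, let S_1, …, S_n ⊆ [n] be sets each of size at most c, and for f : [n] → [n] let K_f := {y ∈ [n] : y ∈ f(S_y)}, where f(S) := {f(x) : x ∈ S}. Then for every μ ∈ (0, 1/2], the probability over a uniformly random function f : [n] → [n] that |K_f| ≥ μn is at most 2^{2⌈μn⌉·log₂(1/μ) + ⌈μn⌉·log₂(c/n)}. -/
/-!
If `|K_f| ≥ k` then some `k`-set `T` satisfies `T ⊆ K_f`, i.e. `f` hits each `y ∈ T` from some
chosen preimage `g y ∈ S_y`. For fixed `T` and `g` this pins `f` on `k` points, so the union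
bound over `T` and `g` gives at most `C(n, k) c^k n^(n-k)` functions, a probability of at most
`C(n, k) (c/n)^k`. Finally `C(n, k) ≤ μ^(-2k)` for `k ≥ μn`: the binomial probability
`C(n, k) μ^k (1-μ)^(n-k)` is at most `1`, and `μ^k ≤ (1-μ)^(n-k)` because
`μ log μ ≤ (1-μ) log (1-μ)` for `μ ≤ 1/2`, by concavity of `log`.
-/

open Finset Real

section Counting

variable {α β : Type*} [Fintype α] [DecidableEq α] [Fintype β] [DecidableEq β]

theorem card_filter_forall_apply_eq_le {ι : Type*} [Fintype ι] (g : ι → α) (v : ι → β)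
    (hv : Function.Injective v) :
    #{f : α → β | ∀ i, f (g i) = v i} ≤
      Fintype.card β ^ (Fintype.card α - Fintype.card ι) := by
  rcases eq_empty_or_nonempty {f : α → β | ∀ i, f (g i) = v i} with h | ⟨f₀, hf₀⟩
  · simp [h]
  have hg : Function.Injective g := fun i j hij =>
    hv (by rw [← (mem_filter.1 hf₀).2 i, ← (mem_filter.1 hf₀).2 j, hij])
  have hcompl : #(univ.image g)ᶜ = Fintype.card α - Fintype.card ι := by
    rw [card_compl, card_image_of_injective _ hg, card_univ]
  calc #{f : α → β | ∀ i, f (g i) = v i}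
      ≤ #(univ : Finset (↥((univ.image g)ᶜ : Finset α) → β)) := by
        refine card_le_card_of_injOn (fun f x => f x) (fun _ _ => mem_univ _) ?_
        intro f₁ hf₁ f₂ hf₂ heq
        funext x
        by_cases hx : x ∈ univ.image g
        · obtain ⟨i, -, rfl⟩ := mem_image.1 hx
          rw [(mem_filter.1 hf₁).2 i, (mem_filter.1 hf₂).2 i]
        · exact congrFun heq ⟨x, mem_compl.2 hx⟩
    _ = _ := by rw [card_univ, Fintype.card_fun, Fintype.card_coe, hcompl]

theorem card_filter_forall_mem_image_le (S : β → Finset α) {c : ℕ} (hS : ∀ y, #(S y) ≤ c)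
    (T : Finset β) :
    #{f : α → β | ∀ y ∈ T, y ∈ (S y).image f} ≤
      c ^ #T * Fintype.card β ^ (Fintype.card α - #T) := by
  have hcover : ({f : α → β | ∀ y ∈ T, y ∈ (S y).image f} : Finset (α → β)) ⊆
      (Fintype.piFinset fun y : T => S y).biUnion
        fun g => {f : α → β | ∀ y : T, f (g y) = y} := by
    intro f hf
    choose g hgS hgf using fun y : T => mem_image.1 ((mem_filter.1 hf).2 y y.2)
    exact mem_biUnion.2 ⟨g, Fintype.mem_piFinset.2 hgS, mem_filter.2 ⟨mem_univ _, hgf⟩⟩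
  calc #{f : α → β | ∀ y ∈ T, y ∈ (S y).image f}
      ≤ ∑ g ∈ Fintype.piFinset fun y : T => S y, #{f : α → β | ∀ y : T, f (g y) = y} :=
        (card_le_card hcover).trans card_biUnion_le
    _ ≤ ∑ _g ∈ Fintype.piFinset fun y : T => S y, Fintype.card β ^ (Fintype.card α - #T) :=
        sum_le_sum fun g _ => by
          simpa using card_filter_forall_apply_eq_le g Subtype.val Subtype.val_injective
    _ ≤ c ^ #T * Fintype.card β ^ (Fintype.card α - #T) := by
        rw [sum_const, smul_eq_mul, Fintype.card_piFinset]
        gcongr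
        simpa using prod_le_pow_card univ (fun y : T => #(S y)) c fun y _ => hS y

theorem card_filter_le_card_filter_mem_image_le (S : β → Finset α) {c : ℕ}
    (hS : ∀ y, #(S y) ≤ c) (k : ℕ) :
    #{f : α → β | k ≤ #{y | y ∈ (S y).image f}} ≤
      (Fintype.card β).choose k * (c ^ k * Fintype.card β ^ (Fintype.card α - k)) := by
  have hcover : ({f : α → β | k ≤ #{y | y ∈ (S y).image f}} : Finset (α → β)) ⊆
      (powersetCard k univ).biUnion
        fun T => {f : α → β | ∀ y ∈ T, y ∈ (S y).image f} := by
    intro f hf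
    obtain ⟨T, hTK, hT⟩ := exists_subset_card_eq (mem_filter.1 hf).2
    exact mem_biUnion.2 ⟨T, mem_powersetCard.2 ⟨subset_univ T, hT⟩,
      mem_filter.2 ⟨mem_univ f, fun y hy => (mem_filter.1 (hTK hy)).2⟩⟩
  calc #{f : α → β | k ≤ #{y | y ∈ (S y).image f}}
      ≤ ∑ T ∈ powersetCard k univ, #{f : α → β | ∀ y ∈ T, y ∈ (S y).image f} :=
        (card_le_card hcover).trans card_biUnion_le
    _ ≤ ∑ _T ∈ powersetCard k (univ : Finset β),
          c ^ k * Fintype.card β ^ (Fintype.card α - k) :=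
        sum_le_sum fun T hT => by
          simpa only [(mem_powersetCard.1 hT).2] using card_filter_forall_mem_image_le S hS T
    _ = _ := by rw [sum_const, smul_eq_mul, card_powersetCard, card_univ]

end Counting

theorem mul_log_le_one_sub_mul_log_one_sub {μ : ℝ} (hμ0 : 0 < μ) (hμ : μ ≤ 1 / 2) :
    μ * log μ ≤ (1 - μ) * log (1 - μ) := by
  have h1μ : 0 < 1 - μ := by linarith
  -- `1 - μ` is the combination of `μ` and `1` with weights `μ/(1-μ)` and `(1-2μ)/(1-μ)`.
  have hconc := strictConcaveOn_log_Ioi.concaveOn.2 (Set.mem_Ioi.2 hμ0) (Set.mem_Ioi.2 one_pos)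
    (show 0 ≤ μ / (1 - μ) by positivity) (show 0 ≤ (1 - 2 * μ) / (1 - μ) by
      exact div_nonneg (by linarith) h1μ.le) (by field_simp; ring)
  have hcomb : μ / (1 - μ) * μ + (1 - 2 * μ) / (1 - μ) * 1 = 1 - μ := by
    field_simp; ring
  simp only [smul_eq_mul, log_one, mul_zero, add_zero, hcomb] at hconc
  rwa [div_mul_eq_mul_div, div_le_iff₀ h1μ, mul_comm (log _)] at hconc

theorem pow_le_one_sub_pow {μ : ℝ} (hμ0 : 0 < μ) (hμ : μ ≤ 1 / 2) {n k : ℕ}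
    (hk : μ * n ≤ k) :
    μ ^ k ≤ (1 - μ) ^ (n - k) := by
  have h1μ : 0 < 1 - μ := by linarith
  have hnk : ((n - k : ℕ) : ℝ) ≤ (1 - μ) * n := by
    rcases le_total k n with h | h
    · rw [Nat.cast_sub h]; linarith
    · rw [Nat.sub_eq_zero_of_le h, Nat.cast_zero]; positivity
  have hlogμ : log μ ≤ 0 := log_nonpos hμ0.le (by linarith)
  have hlog1μ : log (1 - μ) ≤ 0 := log_nonpos h1μ.le (by linarith)
  rw [← log_le_log_iff (by positivity) (by positivity), log_pow, log_pow]
  calc (k : ℝ) * log μ ≤ n * (μ * log μ) := by nlinarith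
    _ ≤ n * ((1 - μ) * log (1 - μ)) :=
        mul_le_mul_of_nonneg_left (mul_log_le_one_sub_mul_log_one_sub hμ0 hμ) n.cast_nonneg
    _ ≤ (n - k : ℕ) * log (1 - μ) := by nlinarith

theorem choose_le_one_div_pow {μ : ℝ} (hμ0 : 0 < μ) (hμ : μ ≤ 1 / 2) {n k : ℕ}
    (hk : μ * n ≤ k) :
    (n.choose k : ℝ) ≤ (1 / μ) ^ (2 * k) := by
  -- `C(n, k) μ^k (1-μ)^(n-k)` is the mass of `{k}` under the binomial law `Bin(n, μ)`.
  have hbin := ProbabilityTheory.binomial_real_singleton n k ⟨μ, hμ0.le, by linarith⟩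
  rw [one_div_pow, le_div_iff₀ (by positivity)]
  calc (n.choose k : ℝ) * μ ^ (2 * k) = n.choose k * μ ^ k * μ ^ k := by ring
    _ ≤ n.choose k * μ ^ k * (1 - μ) ^ (n - k) := by
        gcongr; exact pow_le_one_sub_pow hμ0 hμ hk
    _ ≤ 1 := hbin ▸ MeasureTheory.measureReal_le_one

theorem two_rpow_natCast_mul_logb {x : ℝ} (hx : 0 < x) (m : ℕ) :
    (2 : ℝ) ^ (m * logb 2 x) = x ^ m := by
  rw [mul_comm, rpow_mul zero_le_two, rpow_logb two_pos (by norm_num) hx, rpow_natCast]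

/-- Let `S_1, …, S_n ⊆ [n]` each have size at most `c ≥ 1`, and for
`f : [n] → [n]` let `K_f := {y : y ∈ f(S_y)}`. Then for every `μ ∈ (0, 1/2]`, the
probability over a uniformly random `f` that `|K_f| ≥ μ n` is at most
`2 ^ (2⌈μn⌉ log₂(1/μ) + ⌈μn⌉ log₂(c/n))`. -/
theorem stmt_2 (n c : ℕ) (hc : 1 ≤ c)
    (S : Fin n → Finset (Fin n)) (hS : ∀ y, (S y).card ≤ c)
    (μ : ℝ) (hμ0 : 0 < μ) (hμ : μ ≤ 1 / 2) :
    (Nat.card {f : Fin n → Fin n //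
        μ * n ≤ (Nat.card {y : Fin n // y ∈ (S y).image f} : ℝ)} : ℝ)
      / (Nat.card (Fin n → Fin n)) ≤
    (2 : ℝ) ^ (2 * (⌈μ * n⌉₊ : ℝ) * Real.logb 2 (1 / μ)
        + (⌈μ * n⌉₊ : ℝ) * Real.logb 2 (c / n)) := by
  rcases Nat.eq_zero_or_pos n with rfl | hn
  · simp
  have hn' : (0 : ℝ) < n := Nat.cast_pos.2 hn
  set k := ⌈μ * n⌉₊
  have hk : μ * n ≤ k := Nat.le_ceil _
  have hkn : k ≤ n := Nat.ceil_le.2 (by nlinarith)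
  have hcard : Nat.card {f : Fin n → Fin n //
      μ * n ≤ (Nat.card {y : Fin n // y ∈ (S y).image f} : ℝ)} =
      #{f : Fin n → Fin n | k ≤ #{y | y ∈ (S y).image f}} := by
    simp only [Nat.card_eq_fintype_card, Fintype.card_subtype, k, Nat.ceil_le]
  rw [hcard, Nat.card_eq_fintype_card, Fintype.card_fun, Fintype.card_fin, Nat.cast_pow,
    Real.rpow_add two_pos,
    show 2 * (k : ℝ) = (2 * k : ℕ) by push_cast; ring,
    two_rpow_natCast_mul_logb (by positivity), two_rpow_natCast_mul_logb (by positivity),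
    div_le_iff₀ (by positivity)]
  calc (#{f : Fin n → Fin n | k ≤ #{y | y ∈ (S y).image f}} : ℝ)
      ≤ n.choose k * (c ^ k * n ^ (n - k)) := by
        exact_mod_cast Fintype.card_fin n ▸ card_filter_le_card_filter_mem_image_le S hS k
    _ ≤ (1 / μ) ^ (2 * k) * (c ^ k * n ^ (n - k)) := by
        gcongr; exact choose_le_one_div_pow hμ0 hμ hk
    _ = (1 / μ) ^ (2 * k) * (c / n) ^ k * n ^ n := by
        rw [mul_assoc, ← pow_mul_pow_sub (n : ℝ) hkn, ← mul_assoc ((c / n : ℝ) ^ k),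
          ← mul_pow, div_mul_cancel₀ _ hn'.ne']
end

section
/- For every n ∈ ℕ, τ ∈ [0, 1/2] and δ ∈ (0, 1/2], the probability over a uniformly random function f : [n] → [n] that there exists a set X ⊆ [n] with |X| ≥ τn and |f(X)| ≤ δn is at most 2^{n(h(τ) + h(δ)) + ⌊τn⌋·log₂ δ}, where f(X) := {f(x) : x ∈ X}. -/
/-- The binary entropy function `h(x) = -x log₂ x - (1-x) log₂ (1-x)`
(with `h 0 = h 1 = 0`, since `Real.logb 2 0 = 0`). -/
noncomputable def binEnt (x : ℝ) : ℝ :=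
  -(x * Real.logb 2 x) - (1 - x) * Real.logb 2 (1 - x)

/-!
Round the thresholds down to `m = ⌊τn⌋` and `k = ⌊δn⌋`. If some `X` with `|X| ≥ m` has
`|f(X)| ≤ k`, then some `m`-set `X` is mapped into some `k`-set `Y`. A fixed pair `(X, Y)` is
hit with probability `(k/n)^m ≤ δ^m`, and there are `C(n,m) C(n,k)` pairs. Finally
`C(n,m) ≤ 2^{n h(p)}` whenever `m ≤ pn` and `p ≤ 1/2`: the term `C(n,m) p^m (1-p)^{n-m}` of the
binomial expansion of `(p + (1-p))^n` is at most `1`.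
-/

open Finset Real Fintype

theorem choose_mul_pow_mul_pow_le_one {p : ℝ} (hp0 : 0 ≤ p) (hp1 : p ≤ 1) {n m : ℕ}
    (hm : m ≤ n) : n.choose m * (p ^ m * (1 - p) ^ (n - m)) ≤ 1 :=
  calc (n.choose m : ℝ) * (p ^ m * (1 - p) ^ (n - m))
      = p ^ m * (1 - p) ^ (n - m) * n.choose m := by ring
    _ ≤ ∑ i ∈ range (n + 1), p ^ i * (1 - p) ^ (n - i) * n.choose i := by
        refine single_le_sum (f := fun i => p ^ i * (1 - p) ^ (n - i) * n.choose i)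
          (fun i _ => ?_) (mem_range_succ_iff.mpr hm)
        have : 0 ≤ 1 - p := by linarith
        positivity
    _ = 1 := by rw [← add_pow, add_sub_cancel, one_pow]

theorem choose_le_two_rpow_mul_binEnt {n m : ℕ} {p : ℝ} (hp0 : 0 ≤ p) (hp : p ≤ 1 / 2)
    (hm : m ≤ p * n) : (n.choose m : ℝ) ≤ 2 ^ (n * binEnt p) := by
  obtain rfl | hp0 := hp0.eq_or_lt
  · obtain rfl : m = 0 := by exact_mod_cast hm.trans (zero_mul _).le |>.antisymm m.cast_nonneg
    simp [binEnt]
  have hp1 : 0 < 1 - p := by linarith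
  have hmn : m ≤ n := by
    have : (m : ℝ) ≤ n := hm.trans (by nlinarith)
    exact_mod_cast this
  have hpos : 0 < p ^ m * (1 - p) ^ (n - m) := by positivity
  have hlog : logb 2 (p ^ m * (1 - p) ^ (n - m)) = m * logb 2 p + (n - m) * logb 2 (1 - p) := by
    rw [logb_mul (by positivity) (by positivity), logb_pow, logb_pow, Nat.cast_sub hmn]
  -- `log₂ p ≤ log₂ (1 - p)`, so lowering the weight of `log₂ p` from `p n` to `m` only helps
  have hmono : logb 2 p ≤ logb 2 (1 - p) := logb_le_logb_of_le one_lt_two hp0 (by linarith)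
  calc (n.choose m : ℝ)
      ≤ 1 / (p ^ m * (1 - p) ^ (n - m)) :=
        (le_div_iff₀ hpos).mpr (choose_mul_pow_mul_pow_le_one hp0.le (by linarith) hmn)
    _ = 2 ^ (-logb 2 (p ^ m * (1 - p) ^ (n - m))) := by
        rw [one_div, rpow_neg zero_le_two, rpow_logb zero_lt_two one_lt_two.ne' hpos]
    _ ≤ 2 ^ (n * binEnt p) := by
        gcongr
        · exact one_le_two
        rw [hlog, binEnt]
        nlinarith [mul_nonneg (sub_nonneg.mpr hm) (sub_nonneg.mpr hmono)]

theorem card_piFinset_ite_mem {α β : Type*} [Fintype α] [DecidableEq α] [Fintype β]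
    (X : Finset α) (Y : Finset β) :
    #(piFinset fun a => if a ∈ X then Y else univ) = #Y ^ #X * card β ^ (card α - #X) := by
  simp only [card_piFinset, apply_ite card, card_univ]
  rw [prod_ite, prod_const, prod_const, filter_univ_mem, filter_not, filter_univ_mem,
    ← compl_eq_univ_sdiff, card_compl]

theorem card_exists_card_image_le {α β : Type*} [Fintype α] [Fintype β] [DecidableEq β]
    (m k : ℕ) (hk : k ≤ card β) :
    Nat.card {f : α → β // ∃ X : Finset α, m ≤ #X ∧ #(X.image f) ≤ k} ≤
      (card α).choose m * (card β).choose k * (k ^ m * card β ^ (card α - m)) := by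
  classical
  let mapsTo (X : Finset α) (Y : Finset β) : Finset (α → β) :=
    piFinset fun a => if a ∈ X then Y else univ
  -- shrink `X` to exactly `m` points and enlarge `f(X)` to exactly `k` points
  have hcover : {f : α → β | ∃ X : Finset α, m ≤ #X ∧ #(X.image f) ≤ k} ⊆
      ↑((powersetCard m univ).biUnion fun X => (powersetCard k univ).biUnion (mapsTo X)) := by
    rintro f ⟨X, hX, hfX⟩
    obtain ⟨X', hX'X, hX'⟩ := exists_subset_card_eq hX
    obtain ⟨Y, hfY, -, hY⟩ := exists_subsuperset_card_eq (subset_univ (X'.image f))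
      ((card_le_card (image_subset_image hX'X)).trans hfX) (by simpa using hk)
    simp only [coe_biUnion, Set.mem_iUnion, mem_coe, mapsTo, mem_piFinset]
    refine ⟨X', by simpa using hX', Y, by simpa using hY, fun a => ?_⟩
    split_ifs with ha
    exacts [hfY (mem_image_of_mem f ha), mem_univ _]
  calc Nat.card {f : α → β // ∃ X : Finset α, m ≤ #X ∧ #(X.image f) ≤ k}
      ≤ #((powersetCard m univ).biUnion fun X => (powersetCard k univ).biUnion (mapsTo X)) :=
        (Nat.card_mono (finite_toSet _) hcover).trans_eq (Nat.card_eq_finsetCard _)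
    _ ≤ #(powersetCard m (univ : Finset α)) *
          (#(powersetCard k (univ : Finset β)) * (k ^ m * card β ^ (card α - m))) := by
        refine card_biUnion_le_card_mul _ _ _ fun X hX =>
          card_biUnion_le_card_mul _ _ _ fun Y hY => ?_
        rw [mem_powersetCard] at hX hY
        rw [card_piFinset_ite_mem, hX.2, hY.2]
    _ = _ := by simp only [card_powersetCard, card_univ, mul_assoc]

/-- For every `n`, `τ ∈ [0,1/2]` and `δ ∈ (0,1/2]`, the probability over
a uniformly random `f : [n] → [n]` that some set `X ⊆ [n]` with `|X| ≥ τn` satisfies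
`|f(X)| ≤ δn` is at most `2 ^ (n (h(τ) + h(δ)) + ⌊τn⌋ log₂ δ)`. -/
theorem stmt_4 (n : ℕ) (τ δ : ℝ) (hτ0 : 0 ≤ τ) (hτ : τ ≤ 1 / 2)
    (hδ0 : 0 < δ) (hδ : δ ≤ 1 / 2) :
    (Nat.card {f : Fin n → Fin n // ∃ X : Finset (Fin n),
        τ * n ≤ (X.card : ℝ) ∧ ((X.image f).card : ℝ) ≤ δ * n} : ℝ)
      / (Nat.card (Fin n → Fin n)) ≤
    (2 : ℝ) ^ ((n : ℝ) * (binEnt τ + binEnt δ) + (⌊τ * n⌋₊ : ℝ) * Real.logb 2 δ) := by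
  set m := ⌊τ * n⌋₊
  set k := ⌊δ * n⌋₊
  have hmτ : (m : ℝ) ≤ τ * n := Nat.floor_le (by positivity)
  have hkδ : (k : ℝ) ≤ δ * n := Nat.floor_le (by positivity)
  have hkn : k ≤ n := Nat.floor_le_of_le (by nlinarith)
  have hmn : m ≤ n := Nat.floor_le_of_le (by nlinarith)
  have hfloor : Nat.card {f : Fin n → Fin n // ∃ X : Finset (Fin n),
        τ * n ≤ (X.card : ℝ) ∧ ((X.image f).card : ℝ) ≤ δ * n} ≤
      Nat.card {f : Fin n → Fin n // ∃ X : Finset (Fin n), m ≤ #X ∧ #(X.image f) ≤ k} :=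
    Nat.card_mono (Set.toFinite _) fun f ⟨X, hX, hfX⟩ =>
      ⟨X, Nat.floor_le_of_le hX, Nat.le_floor hfX⟩
  have hcount := hfloor.trans (card_exists_card_image_le m k (by simpa using hkn))
  simp only [Fintype.card_fin] at hcount
  have hpow : (k : ℝ) ^ m * n ^ (n - m) ≤ δ ^ m * n ^ n :=
    calc (k : ℝ) ^ m * n ^ (n - m) ≤ (δ * n) ^ m * n ^ (n - m) := by gcongr
      _ = δ ^ m * n ^ n := by rw [mul_pow, mul_assoc, ← pow_add, Nat.add_sub_cancel' hmn]
  have hδm : (2 : ℝ) ^ (m * logb 2 δ) = δ ^ m := by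
    rw [mul_comm, rpow_mul zero_le_two, rpow_logb two_pos one_lt_two.ne' hδ0, rpow_natCast]
  rw [Nat.card_fun, Nat.card_fin, Nat.cast_pow, div_le_iff₀ (by exact_mod_cast Nat.pow_self_pos),
    rpow_add two_pos, mul_add, rpow_add two_pos, hδm]
  calc _ ≤ (n.choose m : ℝ) * n.choose k * (k ^ m * n ^ (n - m)) := by exact_mod_cast hcount
    _ ≤ 2 ^ (n * binEnt τ) * 2 ^ (n * binEnt δ) * (δ ^ m * n ^ n) := by
        gcongr
        exacts [choose_le_two_rpow_mul_binEnt hτ0 hτ hmτ,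
          choose_le_two_rpow_mul_binEnt hδ0.le hδ hkδ]
    _ = _ := by ring
end

section
/- Let n ≥ 1, let α ∈ (0, 1], and let Inv : F_n × [n] → [n] be any function such that the probability over a uniformly random f ← F_n and uniformly random x ← [n] that Inv(f, f(x)) ∈ f^{−1}(f(x)) is at least α. Then the probability over uniformly random f ← F_n and x ← [n] that Inv(f, f(x)) = x is at least α²/8. -/
/-!
For fixed `f`, every `y` with `f (Inv f y) = y` accounts for `|f⁻¹(y)|` pairs `(f, x)` at which
`Inv` finds a preimage, but for exactly one pair (`x = Inv f y`) at which it finds `x` itself.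
Cauchy–Schwarz over these pairs `(f, y)` bounds the square of the first count by the second count
times `∑ |f⁻¹(y)|²`, which counts the collisions `f x = f x'`; summed over all `f` there are at
most `2 n^(n+1)` of them. This even gives the bound `α² / 2`.
-/

open Finset

theorem card_filter_prod_eq_sum {γ δ : Type*} [Fintype γ] [Fintype δ] (P : γ → δ → Prop)
    [∀ c d, Decidable (P c d)] :
    #{p : γ × δ | P p.1 p.2} = ∑ c, #{d | P c d} := by
  simp only [card_filter, Fintype.sum_prod_type]

theorem sq_sum_sum_le_sum_card_mul {ι κ R : Type*} [Fintype ι] [Semiring R] [LinearOrder R]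
    [IsStrictOrderedRing R] [ExistsAddOfLE R] (t : ι → Finset κ) (h : ι → κ → R) :
    (∑ i, ∑ j ∈ t i, h i j) ^ 2 ≤ (∑ i, (#(t i) : R)) * ∑ i, ∑ j ∈ t i, h i j ^ 2 := by
  rw [sum_sigma', sum_sigma' univ t (fun i j => h i j ^ 2), ← Nat.cast_sum, ← card_sigma]
  exact sq_sum_le_card_mul_sum_sq

variable {α β : Type*} [Fintype α] [Fintype β]

theorem card_filter_fixed_comp_comm [DecidableEq α] [DecidableEq β] (f : α → β) (g : β → α) :
    #{x | g (f x) = x} = #{y | f (g y) = y} := by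
  refine card_nbij' f g ?_ ?_ ?_ ?_ <;> intro _ <;> simp_all

theorem card_filter_comp_fixed_eq_sum [DecidableEq β] (f : α → β) (g : β → α) :
    #{x | f (g (f x)) = f x} = ∑ y with f (g y) = y, #{x | f x = y} := by
  rw [card_eq_sum_card_fiberwise (f := f) (t := {y | f (g y) = y}) (by intro x; simp)]
  refine sum_congr rfl fun y hy => ?_
  rw [filter_filter]
  congr 1
  ext x
  simp only [mem_filter, mem_univ, true_and] at hy ⊢
  constructor
  · exact fun h => h.2
  · rintro rfl; exact ⟨hy, rfl⟩

theorem sum_card_fiber_sq [DecidableEq β] (f : α → β) :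
    ∑ y, #{x | f x = y} ^ 2 = #{p : α × α | f p.1 = f p.2} := by
  rw [card_eq_sum_card_fiberwise (f := fun p => f p.1) (t := univ) (by intro; simp)]
  refine sum_congr rfl fun y _ => ?_
  rw [sq, ← card_product, filter_filter]
  congr 1
  ext p
  simp only [mem_product, mem_filter, mem_univ, true_and]
  grind

theorem card_filter_apply_eq_apply_of_ne [DecidableEq α] [DecidableEq β] {x x' : α}
    (hne : x ≠ x') :
    #{f : α → β | f x = f x'} = Fintype.card β ^ (Fintype.card α - 1) := by
  have hcompl : Fintype.card {j // j ≠ x'} = Fintype.card α - 1 := by simp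
  rw [← hcompl, ← Fintype.card_fun, ← Fintype.card_subtype]
  exact Fintype.card_congr
    { toFun := fun f j => f.1 j
      invFun := fun g => ⟨fun j => if h : j = x' then g ⟨x, hne⟩ else g ⟨j, h⟩, by simp [hne]⟩
      left_inv := fun f => by
        ext j
        by_cases h : j = x'
        · subst h; simp [f.2]
        · simp [h]
      right_inv := fun g => by ext j; simp [j.2] }

theorem sum_card_collisions [DecidableEq α] [DecidableEq β] :
    ∑ f : α → β, #{p : α × α | f p.1 = f p.2} =
      Fintype.card α * Fintype.card β ^ Fintype.card α +
        (Fintype.card α * Fintype.card α - Fintype.card α) *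
          Fintype.card β ^ (Fintype.card α - 1) := by
  simp_rw [card_filter]
  rw [sum_comm, ← univ_product_univ, ← diag_union_offDiag, sum_union (disjoint_diag_offDiag _)]
  simp_rw [← card_filter]
  rw [Finset.sum_congr rfl fun p hp => by rw [(mem_diag.1 hp).2],
    Finset.sum_congr rfl fun p hp => card_filter_apply_eq_apply_of_ne (mem_offDiag.1 hp).2.2]
  simp [diag_card, offDiag_card]

theorem sum_card_collisions_le [DecidableEq α] :
    ∑ f : α → α, #{p : α × α | f p.1 = f p.2} ≤ 2 * Fintype.card ((α → α) × α) := by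
  rw [sum_card_collisions, Fintype.card_prod, Fintype.card_fun]
  rcases Nat.eq_zero_or_pos (Fintype.card α) with h0 | hpos
  · simp [h0]
  · obtain ⟨k, hk⟩ := Nat.exists_eq_add_of_lt hpos
    rw [hk]
    simp only [zero_add, Nat.add_sub_cancel, pow_succ]
    nlinarith [Nat.sub_le ((k + 1) * (k + 1)) (k + 1), Nat.zero_le ((k + 1) ^ k)]

theorem sq_card_filter_comp_fixed_le [DecidableEq α] [DecidableEq β] (Inv : (α → β) → β → α) :
    #{p : (α → β) × α | p.1 (Inv p.1 (p.1 p.2)) = p.1 p.2} ^ 2 ≤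
      (∑ f : α → β, #{q : α × α | f q.1 = f q.2}) *
        #{p : (α → β) × α | Inv p.1 (p.1 p.2) = p.2} := by
  rw [card_filter_prod_eq_sum (fun (f : α → β) x => f (Inv f (f x)) = f x),
    card_filter_prod_eq_sum (fun (f : α → β) x => Inv f (f x) = x),
    Fintype.sum_congr _ _ fun f => card_filter_comp_fixed_eq_sum f (Inv f),
    Fintype.sum_congr _ _ fun f => card_filter_fixed_comp_comm f (Inv f)]
  simp only [← sum_card_fiber_sq]
  have hcs := sq_sum_sum_le_sum_card_mul (R := ℕ)
    (fun f : α → β => ({y | f (Inv f y) = y} : Finset β)) (fun f y => #{x | f x = y})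
  simp only [Nat.cast_id] at hcs
  refine hcs.trans ?_
  rw [mul_comm]
  gcongr
  exact subset_univ _

theorem stmt_5_general (n : ℕ) (α : ℝ) (hα0 : 0 < α)
    (Inv : (Fin n → Fin n) → Fin n → Fin n)
    (h : α ≤ (Nat.card {p : (Fin n → Fin n) × Fin n //
          p.1 (Inv p.1 (p.1 p.2)) = p.1 p.2} : ℝ)
        / (Nat.card ((Fin n → Fin n) × Fin n))) :
    α ^ 2 / 8 ≤ (Nat.card {p : (Fin n → Fin n) × Fin n //
          Inv p.1 (p.1 p.2) = p.2} : ℝ)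
        / (Nat.card ((Fin n → Fin n) × Fin n)) := by
  simp only [Nat.card_eq_fintype_card, Fintype.card_subtype] at h ⊢
  set N := Fintype.card ((Fin n → Fin n) × Fin n)
  set A := #{p : (Fin n → Fin n) × Fin n | p.1 (Inv p.1 (p.1 p.2)) = p.1 p.2}
  set B := #{p : (Fin n → Fin n) × Fin n | Inv p.1 (p.1 p.2) = p.2}
  have key : A ^ 2 ≤ 2 * N * B := by
    grw [sq_card_filter_comp_fixed_le, sum_card_collisions_le]
  have hN : (0 : ℝ) < N := by
    by_contra hN
    rw [le_antisymm (not_lt.1 hN) N.cast_nonneg, div_zero] at h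
    linarith
  rw [le_div_iff₀ hN] at h ⊢
  have hsq : (α * N) ^ 2 ≤ 2 * N * B := by
    calc (α * N) ^ 2 ≤ (A : ℝ) ^ 2 := pow_le_pow_left₀ (by positivity) h 2
      _ ≤ 2 * N * B := by exact_mod_cast key
  nlinarith

/-- Let `n ≥ 1`, `α ∈ (0,1]`, and `Inv : F_n × [n] → [n]` be such that
over uniformly random `f ← F_n` and `x ← [n]`, `Inv(f, f(x)) ∈ f⁻¹(f(x))` with probability
at least `α`. Then `Inv(f, f(x)) = x` with probability at least `α²/8`. -/
theorem stmt_5 (n : ℕ) (hn : 1 ≤ n) (α : ℝ) (hα0 : 0 < α) (hα1 : α ≤ 1)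
    (Inv : (Fin n → Fin n) → Fin n → Fin n)
    (h : α ≤ (Nat.card {p : (Fin n → Fin n) × Fin n //
          p.1 (Inv p.1 (p.1 p.2)) = p.1 p.2} : ℝ)
        / (Nat.card ((Fin n → Fin n) × Fin n))) :
    α ^ 2 / 8 ≤ (Nat.card {p : (Fin n → Fin n) × Fin n //
          Inv p.1 (p.1 p.2) = p.2} : ℝ)
        / (Nat.card ((Fin n → Fin n) × Fin n)) :=
  stmt_5_general n α hα0 Inv h
end

section
/- Let 𝔽 be a finite field with exactly n elements, identified with [n]. Let ℓ, t ∈ ℕ with t ≥ 1, let A ∈ 𝔽^{ℓ×n}, let v ∈ 𝔽^ℓ lie in the image of the map w ↦ A·w, and let B^1, …, B^n ∈ 𝔽^{t×n}. For y ∈ [n] let A^y := stack(A, B^y), the matrix whose rows are the rows of A followed by the rows of B^y. Let F be uniformly distributed over 𝔽^n and let Y be uniformly distributed over [n], independent of F. Then for every μ ∈ (0, 1/2]: Pr[Y ∈ F(E(A^Y)) | A·F = v] ≤ ℓ/n + μ + 2^{2⌈μn⌉·log₂(1/μ) + ⌈μn⌉·log₂(t/n) + ℓ·log₂ n}, where F(E(A^Y))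 := {F_j : j ∈ E(A^Y)}. -/
/-!
Let `T = {f | A f = v}` and let `E` be the set of `j` with `e_j` in the row span of `A`; for every
`y` the set `E(A^y)` contains `E` and has at most `ℓ + t` elements. If `j ∉ E`, some `u` with
`A u = 0` has `u_j = 1`, and translating by multiples of `u` shows that `f_j` is uniformly
distributed on `T`. So the pairs `(f, y)` with `f_j = y` for some `j ∈ E(A^y) \ E` number at most
`(ℓ + t - |E|) |T|`, while each `j ∈ E` accounts for exactly `|T|` pairs in total. Hence the
conditional probability is at most `(ℓ + t) / n`. Finally `t / n ≤ μ + 2 ^ (…)`: either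
`t / n ≤ μ`, or `t / n > μ` and then the exponent is at least `log₂ (t / n)`.
-/

open Finset Matrix

theorem Matrix.exists_mulVec_eq_zero_apply_eq_one {K ι m : Type*} [Field K] [Fintype m]
    [DecidableEq m] (A : Matrix ι m K) {j : m}
    (hj : Pi.single j 1 ∉ Submodule.span K (Set.range A)) :
    ∃ u : m → K, A *ᵥ u = 0 ∧ u j = 1 := by
  obtain ⟨f, hfj, hf⟩ := Submodule.exists_dual_map_eq_bot_of_notMem hj inferInstance
  set u : m → K := fun k => f (Pi.single k 1)
  have hfu (x : m → K) : f x = x ⬝ᵥ u := by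
    conv_lhs => rw [pi_eq_sum_univ' x, map_sum]
    simp [dotProduct, u]
  have hA : A *ᵥ u = 0 := by
    ext r
    rw [mulVec, ← hfu, Pi.zero_apply, ← Submodule.mem_bot K, ← hf]
    exact Submodule.mem_map_of_mem (Submodule.subset_span ⟨r, rfl⟩)
  have huj : u j ≠ 0 := hfj
  refine ⟨(u j)⁻¹ • u, by rw [mulVec_smul, hA, smul_zero], ?_⟩
  simp [huj]

theorem card_le_of_forall_single_mem_span {K ι m : Type*} [Field K] [Fintype ι] [Fintype m]
    [DecidableEq m] (w : ι → m → K) {p : Finset m}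
    (hp : ∀ j ∈ p, Pi.single j 1 ∈ Submodule.span K (Set.range w)) :
    #p ≤ Fintype.card ι := by
  calc #p = Fintype.card p := (Fintype.card_coe p).symm
    _ ≤ (Set.range fun j : p => (Pi.single (j : m) (1 : K) : m → K)).finrank K :=
      linearIndependent_iff_card_le_finrank_span.1 <|
        (Pi.linearIndependent_single_one m K).comp _ Subtype.val_injective
    _ ≤ (Set.range w).finrank K :=
      Submodule.finrank_mono (Submodule.span_le.2 (Set.range_subset_iff.2 fun j => hp j j.2))
    _ ≤ Fintype.card ι := finrank_range_le_card w

theorem Matrix.card_mul_card_filter_apply_eq {K ι m : Type*} [Field K] [Fintype K]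
    [DecidableEq K] [Fintype ι] [Fintype m] [DecidableEq m] (A : Matrix ι m K) (v : ι → K)
    {u : m → K} {j : m}
    (hu : A *ᵥ u = 0) (huj : u j = 1) (y : K) :
    Fintype.card K * #{f ∈ ({f | A *ᵥ f = v} : Finset (m → K)) | f j = y} =
      #({f | A *ᵥ f = v} : Finset (m → K)) := by
  set T : Finset (m → K) := {f | A *ᵥ f = v}
  have hfiber (z : K) : #{f ∈ T | f j = z} = #{f ∈ T | f j = y} := by
    refine card_nbij' (· + (y - z) • u) (· + (z - y) • u) ?_ ?_ ?_ ?_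
    all_goals
      intro f
      simp +contextual [T, mulVec_add, mulVec_smul, hu, huj, add_assoc, ← add_smul]
  rw [card_eq_sum_card_fiberwise (s := T) (f := fun f => f j) (fun _ _ => mem_univ _),
    sum_congr rfl fun z _ => hfiber z, sum_const, card_univ, smul_eq_mul]

theorem sum_card_filter_exists_apply_eq_le {α β : Type*} [Fintype β] [DecidableEq α]
    [DecidableEq β] (T : Finset (α → β)) (E : Finset α) (S : β → Finset α) (k : ℕ)
    (hES : ∀ y, E ⊆ S y) (hS : ∀ y, #(S y) ≤ k)
    (hunif : ∀ y, ∀ j ∉ E, Fintype.card β * #{f ∈ T | f j = y} = #T) :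
    ∑ y, #{f ∈ T | ∃ j ∈ S y, f j = y} ≤ k * #T := by
  rcases isEmpty_or_nonempty β with hβ | ⟨⟨y₀⟩⟩
  · simp
  set n := Fintype.card β
  set c : α → β → ℕ := fun j y => #{f ∈ T | f j = y}
  have hunion (y : β) : #{f ∈ T | ∃ j ∈ S y, f j = y} ≤ ∑ j ∈ S y, c j y := by
    classical
    refine (card_le_card fun f hf => ?_).trans card_biUnion_le
    obtain ⟨hfT, j, hj, hfj⟩ := mem_filter.1 hf
    exact mem_biUnion.2 ⟨j, hj, mem_filter.2 ⟨hfT, hfj⟩⟩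
  have hfixed : ∑ y, ∑ j ∈ E, c j y = #E * #T := by
    rw [sum_comm, ← smul_eq_mul, ← sum_const]
    refine sum_congr rfl fun j _ => ?_
    exact (card_eq_sum_card_fiberwise (fun _ _ => mem_univ _)).symm
  have hfree (y : β) : n * ∑ j ∈ S y \ E, c j y ≤ (k - #E) * #T := by
    rw [mul_sum, sum_congr rfl fun j hj => hunif y j (mem_sdiff.1 hj).2, sum_const, smul_eq_mul,
      card_sdiff_of_subset (hES y)]
    exact Nat.mul_le_mul_right _ (Nat.sub_le_sub_right (hS y) _)
  have hEk : #E ≤ k := (card_le_card (hES y₀)).trans (hS y₀)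
  refine Nat.le_of_mul_le_mul_left ?_ (Fintype.card_pos_iff.2 ⟨y₀⟩)
  calc n * ∑ y, #{f ∈ T | ∃ j ∈ S y, f j = y}
      ≤ n * ∑ y, (∑ j ∈ S y \ E, c j y + ∑ j ∈ E, c j y) := by
        gcongr with y
        rw [sum_sdiff (hES y)]
        exact hunion y
    _ = ∑ y, n * ∑ j ∈ S y \ E, c j y + n * ∑ y, ∑ j ∈ E, c j y := by
        rw [sum_add_distrib, mul_add, mul_sum]
    _ ≤ ∑ _y : β, (k - #E) * #T + n * (#E * #T) := by
        rw [hfixed]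
        exact Nat.add_le_add_right (sum_le_sum fun y _ => hfree y) _
    _ = n * (k * #T) := by
        rw [sum_const, card_univ, smul_eq_mul, ← mul_add, ← add_mul, Nat.sub_add_cancel hEk]

theorem le_add_two_rpow_mul_logb {x μ m c : ℝ} (hμ0 : 0 < μ) (hμ1 : μ ≤ 1) (hm : 1 ≤ m)
    (hc : 0 ≤ c) : x ≤ μ + 2 ^ (2 * m * Real.logb 2 (1 / μ) + m * Real.logb 2 x + c) := by
  rcases le_or_gt x μ with hxμ | hμx
  · have := Real.rpow_pos_of_pos two_pos (2 * m * Real.logb 2 (1 / μ) + m * Real.logb 2 x + c)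
    linarith
  have hL : 0 ≤ Real.logb 2 (1 / μ) := Real.logb_nonneg one_lt_two (one_le_one_div hμ0 hμ1)
  have hlog : Real.logb 2 μ < Real.logb 2 x := Real.logb_lt_logb one_lt_two hμ0 hμx
  have hinv : Real.logb 2 (1 / μ) = -Real.logb 2 μ := by rw [one_div, Real.logb_inv]
  have hexp : Real.logb 2 x ≤ 2 * m * Real.logb 2 (1 / μ) + m * Real.logb 2 x + c := by
    have hpos : 0 ≤ Real.logb 2 x + 2 * Real.logb 2 (1 / μ) := by linarith
    nlinarith [mul_nonneg (sub_nonneg.2 hm) hpos]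
  calc x = 2 ^ Real.logb 2 x := (Real.rpow_logb two_pos (by norm_num) (hμ0.trans hμx)).symm
    _ ≤ 2 ^ (2 * m * Real.logb 2 (1 / μ) + m * Real.logb 2 x + c) :=
      Real.rpow_le_rpow_of_exponent_le one_le_two hexp
    _ ≤ _ := le_add_of_nonneg_left hμ0.le

theorem div_mul_le_div_of_le_mul {N T c n : ℝ} (hN : N ≤ c * T) (hT : 0 ≤ T) (hc : 0 ≤ c)
    (hn : 0 ≤ n) : N / (T * n) ≤ c / n :=
  calc N / (T * n) ≤ c * T / (T * n) := div_le_div_of_nonneg_right hN (by positivity)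
    _ = c / n * (T / T) := by ring
    _ ≤ c / n := mul_le_of_le_one_right (by positivity) (div_self_le_one T)

theorem Nat.card_subtype_prod_eq_sum {α β : Type*} [Fintype α] [Fintype β]
    (P : α × β → Prop) [DecidablePred P] : Nat.card {x // P x} = ∑ y, #{a | P (a, y)} := by
  simp only [Nat.card_eq_fintype_card, Fintype.card_subtype, card_filter,
    Fintype.sum_prod_type_right]

theorem Matrix.natCard_exists_single_mem_span_apply_eq_le {K ι κ m : Type*} [Field K] [Fintype K]
    [Fintype ι] [Fintype κ] [Fintype m] [DecidableEq m] (A : Matrix ι m K) (v : ι → K)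
    (B : K → Matrix κ m K) :
    Nat.card {fy : (m → K) × K // A *ᵥ fy.1 = v ∧ ∃ j : m, Pi.single j 1 ∈
        Submodule.span K (Set.range A ∪ Set.range (B fy.2)) ∧ fy.1 j = fy.2} ≤
      (Fintype.card ι + Fintype.card κ) * Nat.card {f : m → K // A *ᵥ f = v} := by
  classical
  set T : Finset (m → K) := {f | A *ᵥ f = v}
  set E : Finset m := {j | Pi.single j 1 ∈ Submodule.span K (Set.range A)}
  set S : K → Finset m := fun y =>
    {j | Pi.single j 1 ∈ Submodule.span K (Set.range A ∪ Set.range (B y))}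
  have hcount := sum_card_filter_exists_apply_eq_le T E S (Fintype.card ι + Fintype.card κ)
    (fun y j hj => by
      simp only [E, S, mem_filter_univ] at hj ⊢
      exact Submodule.span_mono Set.subset_union_left hj)
    (fun y => by
      simpa using card_le_of_forall_single_mem_span
        (Sum.elim (fun r : ι => A r) fun r : κ => B y r) (p := S y)
        fun j hj => by rw [Set.Sum.elim_range]; exact (mem_filter.1 hj).2)
    (fun y j hj => by
      obtain ⟨u, hu, huj⟩ := Matrix.exists_mulVec_eq_zero_apply_eq_one A (by simpa [E] using hj)
      rw [Matrix.card_mul_card_filter_apply_eq A v hu huj y])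
  rw [Nat.card_subtype_prod_eq_sum, Nat.card_eq_fintype_card, Fintype.card_subtype]
  refine le_of_eq_of_le ?_ hcount
  congr! 2 with y
  ext f
  simp [T, S]

theorem stmt_6_general {𝔽 : Type} [Field 𝔽] [Fintype 𝔽] (n ℓ t : ℕ)
    (hn : Fintype.card 𝔽 = n)
    (A : Matrix (Fin ℓ) (Fin n) 𝔽) (v : Fin ℓ → 𝔽)
    (B : 𝔽 → Matrix (Fin t) (Fin n) 𝔽)
    (μ : ℝ) (hμ0 : 0 < μ) (hμ : μ ≤ 1 / 2) :
    (Nat.card {fy : (Fin n → 𝔽) × 𝔽 // A.mulVec fy.1 = v ∧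
        ∃ j : Fin n,
          (Pi.single j (1 : 𝔽) : Fin n → 𝔽) ∈
            Submodule.span 𝔽
              ((Set.range fun r : Fin ℓ => A r) ∪
                (Set.range fun r : Fin t => (B fy.2) r)) ∧
          fy.1 j = fy.2} : ℝ)
      / (Nat.card {fy : (Fin n → 𝔽) × 𝔽 // A.mulVec fy.1 = v}) ≤
    (ℓ : ℝ) / n + μ + (2 : ℝ) ^ (2 * (⌈μ * n⌉₊ : ℝ) * Real.logb 2 (1 / μ)
        + (⌈μ * n⌉₊ : ℝ) * Real.logb 2 (t / n) + (ℓ : ℝ) * Real.logb 2 n) := by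
  have hcount := Matrix.natCard_exists_single_mem_span_apply_eq_le A v B
  simp only [Fintype.card_fin] at hcount
  have hden : Nat.card {fy : (Fin n → 𝔽) × 𝔽 // A *ᵥ fy.1 = v} =
      Nat.card {f : Fin n → 𝔽 // A *ᵥ f = v} * n := by
    rw [Nat.card_congr (Equiv.prodSubtypeFstEquivSubtypeProd (p := fun f => A *ᵥ f = v)),
      Nat.card_prod, Nat.card_eq_fintype_card (α := 𝔽), hn]
  have hn1 : 1 ≤ n := hn ▸ Fintype.card_pos
  have hm : (1 : ℝ) ≤ ⌈μ * n⌉₊ := by exact_mod_cast Nat.one_le_ceil_iff.2 (by positivity)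
  calc _ ≤ ((ℓ : ℝ) + t) / n := by
        rw [hden, Nat.cast_mul]
        exact div_mul_le_div_of_le_mul (by exact_mod_cast hcount) (Nat.cast_nonneg _)
          (by positivity) (Nat.cast_nonneg _)
    _ = ℓ / n + t / n := add_div _ _ _
    _ ≤ _ := by
        rw [add_assoc]
        gcongr
        exact le_add_two_rpow_mul_logb hμ0 (by linarith) hm
          (mul_nonneg (Nat.cast_nonneg _) (Real.logb_nonneg one_lt_two (by exact_mod_cast hn1)))

/-- Let `𝔽` be a finite field with exactly `n` elements (identified with
`[n]`), `A ∈ 𝔽^{ℓ×n}`, `v` in the image of `w ↦ A ⬝ w`, and `B^y ∈ 𝔽^{t×n}` for each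
`y ∈ 𝔽`. With `F` uniform over `𝔽^n` and `Y` uniform over `𝔽` independent of `F`, for
every `μ ∈ (0,1/2]` the probability, conditioned on `A ⬝ F = v`, that
`Y ∈ F(E(stack(A, B^Y)))` is at most
`ℓ/n + μ + 2 ^ (2⌈μn⌉ log₂(1/μ) + ⌈μn⌉ log₂(t/n) + ℓ log₂ n)`,
where `E(M)` is the set of indices `j` with `e_j` in the row span of `M`. -/
theorem stmt_6 {𝔽 : Type} [Field 𝔽] [Fintype 𝔽] (n ℓ t : ℕ)
    (hn : Fintype.card 𝔽 = n) (ht : 1 ≤ t)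
    (A : Matrix (Fin ℓ) (Fin n) 𝔽) (v : Fin ℓ → 𝔽)
    (hv : ∃ w : Fin n → 𝔽, A.mulVec w = v)
    (B : 𝔽 → Matrix (Fin t) (Fin n) 𝔽)
    (μ : ℝ) (hμ0 : 0 < μ) (hμ : μ ≤ 1 / 2) :
    (Nat.card {fy : (Fin n → 𝔽) × 𝔽 // A.mulVec fy.1 = v ∧
        ∃ j : Fin n,
          (Pi.single j (1 : 𝔽) : Fin n → 𝔽) ∈
            Submodule.span 𝔽
              ((Set.range fun r : Fin ℓ => A r) ∪
                (Set.range fun r : Fin t => (B fy.2) r)) ∧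
          fy.1 j = fy.2} : ℝ)
      / (Nat.card {fy : (Fin n → 𝔽) × 𝔽 // A.mulVec fy.1 = v}) ≤
    (ℓ : ℝ) / n + μ + (2 : ℝ) ^ (2 * (⌈μ * n⌉₊ : ℝ) * Real.logb 2 (1 / μ)
        + (⌈μ * n⌉₊ : ℝ) * Real.logb 2 (t / n) + (ℓ : ℝ) * Real.logb 2 n) :=
  stmt_6_general n ℓ t hn A v B μ hμ0 hμ
end

section
/- Let 𝔽 be a finite field with exactly n elements, identified with [n], and let Inv be a zero-advice non-adaptive inverter with an affine decoder: for every y ∈ [n] there exist α^y ∈ 𝔽^n and β^y ∈ 𝔽 such that Inv(y; f) = ⟨α^y, f⟩ + β^y for all f ∈ F_n. Let F be uniform over F_n and Y = (Y_1, …, Y_n) uniform over [n]^n, independent of F; let X_j := Inv(Y_j; F) and let Z_i be the event that F(X_j) = Y_j for all j ∈ [i] (Z_0 is the sure event). Then for every i ∈ [n] and μ ∈ (0, 1/2]: Pr[Z_i] ≤ ((2i−1)/n + μ + 2^{2⌈μn⌉·log₂(1/μ) − ⌈μn⌉·log₂ n + (2i−2)·log₂ n}) · Pr[Z_{i−1}].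 -/
/-!
Let `K f` be the number of targets `y` that the decoder inverts on `f`. Since the `Y_j` are
independent and uniform, `n ^ (2n) · Pr[Z_i] = ∑_f K(f)^i · n^(n-i)`, so it suffices to show
`∑_f K(f)^i ≤ (4i - 2) ∑_f K(f)^(i-1)`: together with `K ≤ n` this gives
`Pr[Z_i] ≤ min(1, (4i-2)/n) · Pr[Z_{i-1}]`, and the stated coefficient is at least that minimum
(if `μn ≥ 2i - 1` its first two terms already are, otherwise the exponent is nonnegative).

Expanding `K^(i-1)` as a count of tuples `(y_1, …, y_{i-1})` inverted by `f`, the moment bound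
says that on the set of `f` inverting fixed `y_1, …, y_{i-1}` the average of `K` is at most
`4i - 2`. Fixing also the points `x_j` where the inversions happen, that set becomes an affine
subspace `S` of codimension `r ≤ 2(i - 1)`, and on it the average of `K` is at most `2r + 2`:
at most `r` coordinates are constant on `S`, contributing at most `r · #S` over all `y`, and at
every other coordinate the decoder's answer and the value `f x` are nearly independent affine
functions of `f ∈ S`, which contributes at most `(r + 2) · #S`.
-/

open Finset Module
open scoped Classical

theorem Submodule.finrank_le_finrank_inf_ker_add_one {K V : Type*} [Field K] [AddCommGroup V]
    [Module K V] [FiniteDimensional K V] (U : Submodule K V) (θ : Module.Dual K V) :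
    finrank K U ≤ finrank K ↥(U ⊓ LinearMap.ker θ) + 1 := by
  have h₁ := Submodule.finrank_sup_add_finrank_inf_eq U (LinearMap.ker θ)
  have h₂ := θ.finrank_range_add_finrank_ker
  have h₃ := (LinearMap.range θ).finrank_le
  have h₄ := (U ⊔ LinearMap.ker θ).finrank_le
  rw [finrank_self] at h₃
  omega

theorem LinearMap.finrank_le_finrank_ker_add {K V V₂ : Type*} [Field K] [AddCommGroup V]
    [Module K V] [FiniteDimensional K V] [AddCommGroup V₂] [Module K V₂] [FiniteDimensional K V₂]
    (Φ : V →ₗ[K] V₂) : finrank K V ≤ finrank K (LinearMap.ker Φ) + finrank K V₂ := by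
  have := Φ.finrank_range_add_finrank_ker
  have := (LinearMap.range Φ).finrank_le
  omega

section Fibres

variable {𝔽 V W : Type*} [Field 𝔽] [Fintype 𝔽] [AddCommGroup V] [Module 𝔽 V] [Fintype V]
  [AddCommGroup W] [Module 𝔽 W] [DecidableEq W]

theorem card_mul_card_filter_eq_and_eq (Ψ : V →ₗ[𝔽] W) (θ : V →ₗ[𝔽] 𝔽) {u : V}
    (hΨu : Ψ u = 0) (hθu : θ u ≠ 0) (w : W) (c : 𝔽) :
    Fintype.card 𝔽 * #{v | Ψ v = w ∧ θ v = c} = #{v | Ψ v = w} := by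
  -- translation by a multiple of `u` moves between the level sets of `θ` inside a fibre of `Ψ`
  have hshift : ∀ c', #{v | Ψ v = w ∧ θ v = c'} = #{v | Ψ v = w ∧ θ v = c} := by
    intro c'
    refine card_bij' (fun v _ => v + ((c - c') / θ u) • u)
      (fun v _ => v - ((c - c') / θ u) • u) ?_ ?_ (by simp) (by simp) <;>
    · intro v hv
      simp only [mem_filter, mem_univ, true_and] at hv ⊢
      simp [hv.1, hv.2, hΨu, hθu]
  rw [card_eq_sum_card_fiberwise (f := θ) (s := {v | Ψ v = w}) (t := univ)
    fun _ _ => mem_univ _]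
  simp only [filter_filter, hshift, sum_const, card_univ, smul_eq_mul]

end Fibres

section CommonZeros

variable {𝔽 ι : Type*} [Field 𝔽] [Fintype ι]

noncomputable def commonZeros (U : Submodule 𝔽 (ι → 𝔽)) : Finset ι := {x | ∀ f ∈ U, f x = 0}

theorem card_commonZeros_add_finrank_le (U : Submodule 𝔽 (ι → 𝔽)) :
    #(commonZeros U) + finrank 𝔽 U ≤ Fintype.card ι := by
  let R : (ι → 𝔽) →ₗ[𝔽] (commonZeros U → 𝔽) := LinearMap.funLeft 𝔽 𝔽 Subtype.val
  have hU : U ≤ LinearMap.ker R := fun f hf => by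
    ext x; exact (mem_filter.mp x.2).2 f hf
  have hR : Function.Surjective R :=
    LinearMap.funLeft_surjective_of_injective _ _ _ Subtype.val_injective
  have := R.finrank_range_add_finrank_ker
  rw [LinearMap.range_eq_top.mpr hR, finrank_top, finrank_fintype_fun_eq_card,
    Fintype.card_coe, finrank_fintype_fun_eq_card] at this
  have := Submodule.finrank_mono hU
  omega

theorem exists_mem_apply_ne_zero_of_notMem_commonZeros {U : Submodule 𝔽 (ι → 𝔽)} {x : ι}
    (hx : x ∉ commonZeros U) : ∃ f ∈ U, f x ≠ 0 := by
  simpa [commonZeros] using hx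

end CommonZeros

theorem sum_card_filter_pow_mul_eq {α κ : Type*} [Fintype α] [Fintype κ] (p : κ → α → Prop)
    (h : α → ℕ) (m : ℕ) :
    ∑ a, #{y | p y a} ^ m * h a = ∑ g : Fin m → κ, ∑ a ∈ {a | ∀ j, p (g j) a}, h a := by
  simp_rw [← Fintype.card_piFinset_const, ← smul_eq_mul, ← sum_const]
  refine sum_comm' fun a g => ?_
  simp [Fintype.mem_piFinset]

theorem natCard_subtype_forall_lt_eq_sum {α κ : Type*} [Fintype α] [Fintype κ]
    (p : κ → α → Prop) {n k : ℕ} (hk : k ≤ n) :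
    Nat.card {ag : α × (Fin n → κ) // ∀ j : Fin n, (j : ℕ) < k → p (ag.2 j) ag.1}
      = ∑ a, #{y | p y a} ^ k * Fintype.card κ ^ (n - k) := by
  rw [Nat.card_eq_fintype_card, Fintype.card_subtype, ← univ_product_univ, card_filter,
    sum_product]
  refine sum_congr rfl fun a _ => ?_
  have hpi : ({g : Fin n → κ | ∀ j : Fin n, (j : ℕ) < k → p (g j) a} : Finset _)
      = Fintype.piFinset fun j : Fin n =>
          if (j : ℕ) < k then ({y | p y a} : Finset κ) else univ := by
    ext g
    simp only [mem_filter, mem_univ, true_and, Fintype.mem_piFinset]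
    refine forall_congr' fun j => ?_
    split_ifs <;> simp [*]
  have hlt : #{j : Fin n | (j : ℕ) < k} = k := by
    rw [Fin.card_filter_val_lt, min_eq_right hk]
  have hge : #{j : Fin n | ¬ (j : ℕ) < k} = n - k := by
    rw [filter_not, card_sdiff_of_subset (filter_subset _ _), hlt, card_univ, Fintype.card_fin]
  rw [← card_filter, hpi, Fintype.card_piFinset]
  simp only [apply_ite card, prod_ite, prod_const, hlt, hge, card_univ]

section Decoder

variable {ι κ : Type*}

theorem card_filter_apply_eq_sum_card [Fintype ι] (s : Finset (ι → κ)) (D : (ι → κ) → ι)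
    (y : κ) :
    #{f ∈ s | f (D f) = y} = ∑ x, #{f ∈ s | D f = x ∧ f x = y} := by
  rw [card_eq_sum_card_fiberwise (f := D) (t := univ) (fun _ _ => mem_univ _)]
  refine sum_congr rfl fun x _ => congrArg card ?_
  rw [filter_filter]
  exact filter_congr fun f _ => ⟨fun ⟨h, hx⟩ => ⟨hx, hx ▸ h⟩, fun ⟨hx, h⟩ => ⟨hx ▸ h, hx⟩⟩

theorem sum_sum_card_filter_le_card_mul [Fintype κ] (s : Finset (ι → κ))
    (D : κ → (ι → κ) → ι) (Z : Finset ι) :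
    ∑ y, ∑ x ∈ Z, #{f ∈ s | D y f = x ∧ f x = y} ≤ #Z * #s := by
  rw [sum_comm, ← smul_eq_mul, ← sum_const]
  refine sum_le_sum fun x _ => ?_
  calc ∑ y, #{f ∈ s | D y f = x ∧ f x = y} ≤ ∑ y, #{f ∈ s | f x = y} :=
        sum_le_sum fun y _ => card_le_card <| monotone_filter_right _ fun _ _ h => h.2
    _ = #s := (card_eq_sum_card_fiberwise fun _ _ => mem_univ _).symm

variable {𝔽 W : Type*} [Field 𝔽] [Fintype 𝔽] [AddCommGroup W] [Module 𝔽 W] [DecidableEq W]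

/-- At a coordinate `x` not constant on the fibre, `f x = y` cuts the fibre by a factor `n`;
unless `x` is also constant on the smaller fibre where `ℓ f + c = x`, adding that condition cuts
it by `n ^ 2`, and by dimension count there are at most `r + 1` such exceptional `x`. -/
theorem card_mul_sum_card_filter_le (Ψ : (𝔽 → 𝔽) →ₗ[𝔽] W) (w : W) (ℓ : Dual 𝔽 (𝔽 → 𝔽))
    (c y : 𝔽) {r : ℕ} (hr : Fintype.card 𝔽 ≤ finrank 𝔽 (LinearMap.ker Ψ) + r) :
    Fintype.card 𝔽 * ∑ x ∈ (commonZeros (LinearMap.ker Ψ))ᶜ,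
        #{f | Ψ f = w ∧ ℓ f + c = x ∧ f x = y}
      ≤ (r + 2) * #{f | Ψ f = w} := by
  have hZ' : #(commonZeros (LinearMap.ker (Ψ.prod ℓ))) ≤ r + 1 := by
    have h₁ := card_commonZeros_add_finrank_le (LinearMap.ker (Ψ.prod ℓ))
    have h₂ := (LinearMap.ker Ψ).finrank_le_finrank_inf_ker_add_one ℓ
    rw [LinearMap.ker_prod] at h₁ ⊢
    omega
  have hnonconst : ∀ x ∉ commonZeros (LinearMap.ker Ψ),
      Fintype.card 𝔽 * #{f | Ψ f = w ∧ ℓ f + c = x ∧ f x = y} ≤ #{f | Ψ f = w} := by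
    intro x hx
    obtain ⟨u, hu, hux⟩ := exists_mem_apply_ne_zero_of_notMem_commonZeros hx
    rw [← card_mul_card_filter_eq_and_eq Ψ (LinearMap.proj x) hu hux w y]
    exact Nat.mul_le_mul_left _ <| card_le_card <| monotone_filter_right _
      fun _ _ h => ⟨h.1, h.2.2⟩
  set Z' := commonZeros (LinearMap.ker (Ψ.prod ℓ))
  have hgeneric : ∀ x ∉ Z',
      Fintype.card 𝔽 * #{f | Ψ f = w ∧ ℓ f + c = x ∧ f x = y}
        = #{f | Ψ f = w ∧ ℓ f + c = x} := by
    intro x hx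
    obtain ⟨u, hu, hux⟩ := exists_mem_apply_ne_zero_of_notMem_commonZeros hx
    have := card_mul_card_filter_eq_and_eq (Ψ.prod ℓ) (LinearMap.proj x) hu hux (w, x - c) y
    simpa [Prod.ext_iff, eq_sub_iff_add_eq, and_assoc] using this
  rw [mul_sum, ← sum_filter_add_sum_filter_not _ (· ∈ Z')]
  have hsplit : ∑ x, #{f | Ψ f = w ∧ ℓ f + c = x} = #{f | Ψ f = w} := by
    rw [card_eq_sum_card_fiberwise (f := fun f => ℓ f + c) (t := univ) fun _ _ => mem_univ _]
    simp only [filter_filter]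
  calc _ ≤ ∑ x ∈ Z', #{f | Ψ f = w} + ∑ x, #{f | Ψ f = w ∧ ℓ f + c = x} := by
        gcongr
        · exact (sum_le_sum fun x hx => hnonconst x (mem_compl.mp (mem_filter.mp hx).1)).trans
            (sum_le_sum_of_subset fun x hx => (mem_filter.mp hx).2)
        · rw [sum_congr rfl fun x hx => hgeneric x (mem_filter.mp hx).2]
          exact sum_le_sum_of_subset (subset_univ _)
    _ ≤ (r + 2) * #{f | Ψ f = w} := by
        rw [sum_const, smul_eq_mul, hsplit]
        linarith [Nat.mul_le_mul_right #{f | Ψ f = w} hZ']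

theorem sum_card_filter_apply_decoder_le (Ψ : (𝔽 → 𝔽) →ₗ[𝔽] W) (w : W)
    (L : 𝔽 → Dual 𝔽 (𝔽 → 𝔽)) (b : 𝔽 → 𝔽) {r : ℕ}
    (hr : Fintype.card 𝔽 ≤ finrank 𝔽 (LinearMap.ker Ψ) + r) :
    ∑ y, #{f | Ψ f = w ∧ f (L y f + b y) = y} ≤ (2 * r + 2) * #{f | Ψ f = w} := by
  have hZ : #(commonZeros (LinearMap.ker Ψ)) ≤ r := by
    have := card_commonZeros_add_finrank_le (LinearMap.ker Ψ)
    omega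
  set Z := commonZeros (LinearMap.ker Ψ)
  have hfixed := sum_sum_card_filter_le_card_mul {f | Ψ f = w} (fun y f => L y f + b y) Z
  have hfree : ∑ y, ∑ x ∈ Zᶜ, #{f | Ψ f = w ∧ L y f + b y = x ∧ f x = y}
      ≤ (r + 2) * #{f | Ψ f = w} := by
    refine Nat.le_of_mul_le_mul_left ?_ (Fintype.card_pos (α := 𝔽))
    calc _ ≤ ∑ _y : 𝔽, (r + 2) * #{f | Ψ f = w} := by
          rw [mul_sum]
          exact sum_le_sum fun y _ => card_mul_sum_card_filter_le Ψ w (L y) (b y) y hr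
      _ = _ := by rw [sum_const, card_univ, smul_eq_mul]
  calc _ = ∑ y, ∑ x ∈ Z, #{f | Ψ f = w ∧ L y f + b y = x ∧ f x = y}
        + ∑ y, ∑ x ∈ Zᶜ, #{f | Ψ f = w ∧ L y f + b y = x ∧ f x = y} := by
        rw [← sum_add_distrib]
        refine sum_congr rfl fun y _ => ?_
        rw [sum_add_sum_compl]
        simpa only [filter_filter] using
          card_filter_apply_eq_sum_card {f | Ψ f = w} (fun f => L y f + b y) y
    _ ≤ #Z * #{f | Ψ f = w} + (r + 2) * #{f | Ψ f = w} := by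
        gcongr
        simpa only [filter_filter] using hfixed
    _ ≤ (2 * r + 2) * #{f | Ψ f = w} := by
        linarith [Nat.mul_le_mul_right #{f | Ψ f = w} hZ]

end Decoder

section Moments

variable {𝔽 : Type*} [Field 𝔽] [Fintype 𝔽] (L : 𝔽 → Dual 𝔽 (𝔽 → 𝔽)) (b : 𝔽 → 𝔽)

noncomputable def successCount (f : 𝔽 → 𝔽) : ℕ := #{y | f (L y f + b y) = y}

theorem sum_successCount_le_of_forall_inverts {m : ℕ} (g : Fin m → 𝔽) :
    ∑ f ∈ {f : 𝔽 → 𝔽 | ∀ j, f (L (g j) f + b (g j)) = g j}, successCount L b f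
      ≤ (4 * m + 2) * #{f : 𝔽 → 𝔽 | ∀ j, f (L (g j) f + b (g j)) = g j} := by
  set P : Finset (𝔽 → 𝔽) := {f | ∀ j, f (L (g j) f + b (g j)) = g j}
  -- on the functions whose `j`-th inversion point is `v j`, being in `P` is an affine condition
  let Φ (v : Fin m → 𝔽) : (𝔽 → 𝔽) →ₗ[𝔽] (Fin m → 𝔽) × (Fin m → 𝔽) :=
    (LinearMap.pi fun j => L (g j)).prod (LinearMap.pi fun j => LinearMap.proj (v j))
  have hfibre (v : Fin m → 𝔽) :
      {f ∈ P | (fun j => L (g j) f + b (g j)) = v}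
        = ({f | Φ v f = (fun j => v j - b (g j), g)} : Finset _) := by
    simp only [P, filter_filter]
    refine filter_congr fun f _ => ?_
    simp only [Φ, LinearMap.prod_apply, Function.prod, LinearMap.pi_apply, LinearMap.proj_apply,
      Prod.mk.injEq, funext_iff, eq_sub_iff_add_eq]
    constructor
    · rintro ⟨h, hv⟩
      exact ⟨hv, fun j => hv j ▸ h j⟩
    · rintro ⟨hv, h⟩
      exact ⟨fun j => (hv j).symm ▸ h j, hv⟩
  have hcodim (v : Fin m → 𝔽) :
      Fintype.card 𝔽 ≤ finrank 𝔽 (LinearMap.ker (Φ v)) + 2 * m := by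
    have := (Φ v).finrank_le_finrank_ker_add
    rwa [finrank_prod, finrank_fintype_fun_eq_card, finrank_fintype_fun_eq_card,
      Fintype.card_fin, ← two_mul] at this
  rw [← sum_fiberwise P (fun f j => L (g j) f + b (g j)), card_eq_sum_card_fiberwise
    (f := fun f j => L (g j) f + b (g j)) (t := univ) fun _ _ => mem_univ _, mul_sum]
  refine sum_le_sum fun v _ => ?_
  rw [hfibre]
  calc _ = ∑ y, #{f | Φ v f = (fun j => v j - b (g j), g) ∧ f (L y f + b y) = y} := by
        simp only [successCount, card_filter, ← filter_filter]
        exact sum_comm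
    _ ≤ _ := by
        have h := sum_card_filter_apply_decoder_le (Φ v) (fun j => v j - b (g j), g) L b
          (hcodim v)
        rwa [show 2 * (2 * m) + 2 = 4 * m + 2 by ring] at h

theorem sum_successCount_pow_succ_le (m : ℕ) :
    ∑ f, successCount L b f ^ (m + 1) ≤ (4 * m + 2) * ∑ f, successCount L b f ^ m := by
  have hexpand := sum_card_filter_pow_mul_eq (fun y (f : 𝔽 → 𝔽) => f (L y f + b y) = y)
  calc ∑ f, successCount L b f ^ (m + 1)
        = ∑ f, successCount L b f ^ m * successCount L b f := by
        simp only [pow_succ]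
    _ ≤ ∑ g : Fin m → 𝔽, (4 * m + 2) * #{f : 𝔽 → 𝔽 | ∀ j, f (L (g j) f + b (g j)) = g j} := by
        unfold successCount
        rw [hexpand]
        exact sum_le_sum fun g _ => sum_successCount_le_of_forall_inverts L b g
    _ = (4 * m + 2) * ∑ f, successCount L b f ^ m := by
        rw [← mul_sum]
        simpa [successCount] using (hexpand (fun _ => 1) m).symm

theorem successCount_le (f : 𝔽 → 𝔽) : successCount L b f ≤ Fintype.card 𝔽 :=
  card_le_univ _

theorem sum_successCount_pow_succ_mul_le (m k : ℕ) :
    ∑ f, successCount L b f ^ (m + 1) * Fintype.card 𝔽 ^ k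
      ≤ ∑ f, successCount L b f ^ m * Fintype.card 𝔽 ^ (k + 1) := by
  refine sum_le_sum fun f _ => ?_
  calc successCount L b f ^ (m + 1) * Fintype.card 𝔽 ^ k
      = successCount L b f ^ m * successCount L b f * Fintype.card 𝔽 ^ k := by ring
    _ ≤ successCount L b f ^ m * Fintype.card 𝔽 * Fintype.card 𝔽 ^ k := by
        gcongr; exact successCount_le L b f
    _ = successCount L b f ^ m * Fintype.card 𝔽 ^ (k + 1) := by ring

theorem card_mul_sum_successCount_pow_succ_mul_le (m k : ℕ) :
    Fintype.card 𝔽 * ∑ f, successCount L b f ^ (m + 1) * Fintype.card 𝔽 ^ k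
      ≤ (4 * m + 2) * ∑ f, successCount L b f ^ m * Fintype.card 𝔽 ^ (k + 1) := by
  calc Fintype.card 𝔽 * ∑ f, successCount L b f ^ (m + 1) * Fintype.card 𝔽 ^ k
      = (∑ f, successCount L b f ^ (m + 1)) * Fintype.card 𝔽 ^ (k + 1) := by
        rw [mul_sum, sum_mul]; ring_nf
    _ ≤ ((4 * m + 2) * ∑ f, successCount L b f ^ m) * Fintype.card 𝔽 ^ (k + 1) := by
        gcongr; exact sum_successCount_pow_succ_le L b m
    _ = (4 * m + 2) * ∑ f, successCount L b f ^ m * Fintype.card 𝔽 ^ (k + 1) := by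
        rw [mul_assoc, sum_mul]

end Moments

theorem exponent_nonneg {n i : ℕ} (hn : 0 < n) (hi : 1 ≤ i) {μ : ℝ} (hμ0 : 0 < μ)
    (hμ : μ ≤ 1 / 2) (hsmall : μ * n < 2 * i - 1) :
    0 ≤ 2 * (⌈μ * n⌉₊ : ℝ) * Real.logb 2 (1 / μ) - (⌈μ * n⌉₊ : ℝ) * Real.logb 2 n
      + (2 * (i : ℝ) - 2) * Real.logb 2 n := by
  obtain ⟨m, rfl⟩ : ∃ m, i = m + 1 := ⟨i - 1, by omega⟩
  push_cast at hsmall ⊢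
  have hS : (⌈μ * n⌉₊ : ℝ) ≤ 2 * m + 1 := by
    have : ⌈μ * n⌉₊ ≤ 2 * m + 1 := Nat.ceil_le.mpr (by push_cast; linarith)
    exact_mod_cast this
  have hA : 1 ≤ Real.logb 2 (1 / μ) := by
    rw [Real.le_logb_iff_rpow_le one_lt_two (by positivity)]
    rw [Real.rpow_one, le_div_iff₀ hμ0]
    linarith
  have hN : 0 ≤ Real.logb 2 n := Real.logb_nonneg one_lt_two (by exact_mod_cast hn)
  have hNA : Real.logb 2 n < 2 * m + 1 + Real.logb 2 (1 / μ) := by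
    have hpow : (2 * m + 1 : ℝ) < 2 ^ (2 * m + 1) := by exact_mod_cast Nat.lt_two_pow_self
    calc Real.logb 2 n < Real.logb 2 (2 ^ (2 * m + 1) * (1 / μ)) := by
          refine Real.logb_lt_logb one_lt_two (by exact_mod_cast hn) ?_
          rw [mul_one_div, lt_div_iff₀ hμ0]
          linarith
      _ = 2 * m + 1 + Real.logb 2 (1 / μ) := by
          rw [Real.logb_mul (by positivity) (by positivity), Real.logb_pow,
            Real.logb_self_eq_one one_lt_two]
          push_cast
          ring
  rcases le_or_gt (Real.logb 2 n) (2 * Real.logb 2 (1 / μ)) with h | h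
  · nlinarith [Nat.cast_nonneg (α := ℝ) ⌈μ * n⌉₊, Nat.cast_nonneg (α := ℝ) m]
  · nlinarith [Nat.cast_nonneg (α := ℝ) m]

theorem min_one_le_coefficient {n i : ℕ} (hn : 0 < n) (hi : 1 ≤ i) {μ : ℝ} (hμ0 : 0 < μ)
    (hμ : μ ≤ 1 / 2) :
    min 1 ((4 * (i : ℝ) - 2) / n) ≤ (2 * (i : ℝ) - 1) / n + μ
        + (2 : ℝ) ^ (2 * (⌈μ * n⌉₊ : ℝ) * Real.logb 2 (1 / μ)
            - (⌈μ * n⌉₊ : ℝ) * Real.logb 2 n + (2 * (i : ℝ) - 2) * Real.logb 2 n) := by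
  have hn' : (0 : ℝ) < n := by exact_mod_cast hn
  have hi' : (1 : ℝ) ≤ i := by exact_mod_cast hi
  have hfirst : 0 ≤ (2 * (i : ℝ) - 1) / n := div_nonneg (by linarith) hn'.le
  rcases lt_or_ge (μ * n) (2 * i - 1) with h | h
  · have := Real.one_le_rpow one_le_two (exponent_nonneg hn hi hμ0 hμ h)
    linarith [min_le_left 1 ((4 * (i : ℝ) - 2) / n)]
  · have : (2 * (i : ℝ) - 1) / n ≤ μ := by rwa [div_le_iff₀ hn']
    have := Real.rpow_pos_of_pos two_pos
      (2 * (⌈μ * n⌉₊ : ℝ) * Real.logb 2 (1 / μ) - ⌈μ * n⌉₊ * Real.logb 2 n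
        + (2 * i - 2) * Real.logb 2 n)
    have hsplit : (4 * (i : ℝ) - 2) / n = (2 * i - 1) / n + (2 * i - 1) / n := by ring
    linarith [min_le_right 1 ((4 * (i : ℝ) - 2) / n)]

theorem le_min_one_mul_of_le {x y n a : ℕ} (hn : 0 < n) (hxy : x ≤ y) (hmom : n * x ≤ a * y) :
    (x : ℝ) ≤ min 1 ((a : ℝ) / n) * y := by
  rw [min_mul_of_nonneg _ _ (Nat.cast_nonneg y)]
  refine le_min (by simpa using hxy) ?_
  rw [div_mul_eq_mul_div, le_div_iff₀ (by exact_mod_cast hn), mul_comm]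
  exact_mod_cast hmom

/-- Let `𝔽` be a finite field with exactly `n` elements, identified with
`[n]` (so functions `[n] → [n]` are vectors in `𝔽^n`, indexed by `𝔽`). Let `Inv` be a
zero-advice non-adaptive inverter with an affine decoder: for every `y` there are
`α^y ∈ 𝔽^n`, `β^y ∈ 𝔽` with `Inv(y; f) = ⟨α^y, f⟩ + β^y` for all `f`. With `F` uniform
over `F_n` and `Y = (Y_1,…,Y_n)` uniform over `[n]^n` independent of `F`, and `Z_i` the
event `∀ j ≤ i, F(Inv(Y_j; F)) = Y_j`, for every `i ∈ [n]` and `μ ∈ (0,1/2]`: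
`Pr[Z_i] ≤ ((2i-1)/n + μ + 2^(2⌈μn⌉log₂(1/μ) − ⌈μn⌉log₂ n + (2i−2)log₂ n)) Pr[Z_{i-1}]`. -/
theorem stmt_7 {𝔽 : Type} [Field 𝔽] [Fintype 𝔽] (n : ℕ) (hn : Fintype.card 𝔽 = n)
    (Inv : 𝔽 → (𝔽 → 𝔽) → 𝔽)
    (haff : ∀ y : 𝔽, ∃ (α : 𝔽 → 𝔽) (β : 𝔽),
      ∀ f : 𝔽 → 𝔽, Inv y f = (∑ x : 𝔽, α x * f x) + β)
    (i : ℕ) (hi1 : 1 ≤ i) (hin : i ≤ n)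
    (μ : ℝ) (hμ0 : 0 < μ) (hμ : μ ≤ 1 / 2) :
    (Nat.card {fy : (𝔽 → 𝔽) × (Fin n → 𝔽) //
        ∀ j : Fin n, (j : ℕ) < i → fy.1 (Inv (fy.2 j) fy.1) = fy.2 j} : ℝ)
      / (Nat.card ((𝔽 → 𝔽) × (Fin n → 𝔽))) ≤
    ((2 * (i : ℝ) - 1) / n + μ
        + (2 : ℝ) ^ (2 * (⌈μ * n⌉₊ : ℝ) * Real.logb 2 (1 / μ)
            - (⌈μ * n⌉₊ : ℝ) * Real.logb 2 n + (2 * (i : ℝ) - 2) * Real.logb 2 n))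
      * ((Nat.card {fy : (𝔽 → 𝔽) × (Fin n → 𝔽) //
          ∀ j : Fin n, (j : ℕ) < i - 1 → fy.1 (Inv (fy.2 j) fy.1) = fy.2 j} : ℝ)
        / (Nat.card ((𝔽 → 𝔽) × (Fin n → 𝔽)))) := by
  choose α β hInv using haff
  let L : 𝔽 → Dual 𝔽 (𝔽 → 𝔽) := fun y => ∑ x, α y x • LinearMap.proj x
  obtain rfl : Inv = fun y f => L y f + β y := by
    ext y f
    simp [L, hInv]
  subst hn
  obtain ⟨m, rfl⟩ : ∃ m, i = m + 1 := ⟨i - 1, by omega⟩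
  obtain ⟨k, hk⟩ : ∃ k, Fintype.card 𝔽 = m + 1 + k := ⟨_, (Nat.add_sub_of_le hin).symm⟩
  have hcount := fun l (hl : l ≤ Fintype.card 𝔽) =>
    natCard_subtype_forall_lt_eq_sum (fun y (f : 𝔽 → 𝔽) => f (L y f + β y) = y) hl
  rw [hcount _ hin, hcount _ (by omega)]
  have hcard : 0 < Fintype.card 𝔽 := Fintype.card_pos
  rw [Nat.add_sub_cancel, show Fintype.card 𝔽 - (m + 1) = k by omega,
    show Fintype.card 𝔽 - m = k + 1 by omega, mul_div_assoc',
    div_le_div_iff_of_pos_right (Nat.cast_pos.mpr Nat.card_pos)]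
  have hcoef := min_one_le_coefficient hcard hi1 hμ0 hμ
  rw [show 4 * ((m + 1 : ℕ) : ℝ) - 2 = ((4 * m + 2 : ℕ) : ℝ) by push_cast; ring] at hcoef
  calc _ ≤ min 1 (((4 * m + 2 : ℕ) : ℝ) / Fintype.card 𝔽)
        * (∑ f, successCount L β f ^ m * Fintype.card 𝔽 ^ (k + 1) : ℕ) :=
        le_min_one_mul_of_le hcard (sum_successCount_pow_succ_mul_le L β m k)
          (card_mul_sum_successCount_pow_succ_mul_le L β m k)
    _ ≤ _ := mul_le_mul_of_nonneg_right hcoef (Nat.cast_nonneg _)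
end

section
/- Let 𝔽 be a finite field with exactly n elements, identified with [n], and let Inv = (P, Q, D) be an s-advice, q-query non-adaptive inverter with a d-depth affine decision tree decoder, where 1 ≤ q ≤ n/16. Then for every τ ∈ [0, 1], every δ ∈ (0, 1], and every natural number m ≤ n·log₂(n/q) / (4(d+1)·log₂ n): Pr_{f←F_n}[ Pr_{x←[n]}[Inv(f(x); f) ∈ f^{−1}(f(x))] ≥ τ ] ≤ α_{τ,δ} + 2^s · δ^{−m} · ∏_{j=1}^{m} ((d+1)j/n + max{(q/n)^{1/4}, 2(d+1)j·log₂ n / (n·log₂(n/q))}), where α_{τ,δ} := Pr_{f←F_n}[∃ X ⊆ [n] with |X| ≥ τn and |f(X)| ≤ δn]. -/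
/-!
Fix the advice `a`. For each target `y` the decoder is an affine decision tree of depth `d` in `f`;
let `Y_a(f)` be the set of targets it inverts. Run the trees on a uniformly random solution `f` of
an affine system `S`: a target is inverted either at an output coordinate left undetermined, with
probability `1/n`, or at a coordinate determined by `S` and the answers along the path. There are
at most `|S| + d` of the latter, and a coordinate newly determined by a question takes the value
`y` for at most one of its `n` equally likely answers; hence `E|Y_a(f)| ≤ |S| + d + 1`.
Conditioning on `y ∈ Y_a(f)` adds the `d + 1` constraints of a root-to-leaf path and its output,
so iterating gives `E|Y_a(f)|^m ≤ ∏_{j=1}^m (d+1) j`, and Markov's inequality bounds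
`Pr[|Y_a(f)| > δn]`. Finally `f` maps the set `X` of inputs inverted successfully into
`Y_{P f}(f)`, so if `|X| ≥ τn` then either `|f(X)| ≤ δn` or `|Y_{P f}(f)| > δn`, and a union bound
over the `2^s` advice strings concludes.
-/

open Finset Matrix

lemma pow_mul_card_filter_lt_le_sum_pow {α : Type*} (s : Finset α) (g : α → ℕ) {t : ℝ}
    (ht : 0 ≤ t) (m : ℕ) :
    t ^ m * #{x ∈ s | t < g x} ≤ ∑ x ∈ s, (g x : ℝ) ^ m :=
  calc t ^ m * #{x ∈ s | t < g x} = ∑ _x ∈ {x ∈ s | t < g x}, t ^ m := by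
        rw [sum_const, nsmul_eq_mul, mul_comm]
    _ ≤ ∑ x ∈ {x ∈ s | t < g x}, (g x : ℝ) ^ m :=
        sum_le_sum fun x hx => pow_le_pow_left₀ ht (mem_filter.1 hx).2.le m
    _ ≤ ∑ x ∈ s, (g x : ℝ) ^ m :=
        sum_le_sum_of_subset_of_nonneg (filter_subset _ _) fun _ _ _ => by positivity

/-- If `f` maps the inputs `X f` on which an inverter succeeds into a set `Y (P f) f` that
depends on `f` only through the advice `P f`, then either `f` compresses `X f` or that set is
large. -/
lemma card_filter_le_card_filter_add_sum {α ι : Type*} [Fintype α] [DecidableEq α] [Fintype ι]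
    (X : (α → α) → Finset α) (Y : ι → (α → α) → Finset α) (P : (α → α) → ι)
    (hXY : ∀ f, (X f).image f ⊆ Y (P f) f) (a b : ℝ) :
    #{f : α → α | a ≤ #(X f)} ≤ #{f : α → α | ∃ X' : Finset α, a ≤ #X' ∧ (#(X'.image f) : ℝ) ≤ b}
      + ∑ i, #{f : α → α | b < #(Y i f)} := by
  calc #{f : α → α | a ≤ #(X f)}
      ≤ #(({f | ∃ X' : Finset α, a ≤ #X' ∧ (#(X'.image f) : ℝ) ≤ b} : Finset (α → α))
          ∪ univ.biUnion fun i => {f | b < #(Y i f)}) := by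
        refine card_le_card fun f hf => ?_
        rw [mem_filter] at hf
        by_cases hcompress : ∃ X' : Finset α, a ≤ #X' ∧ (#(X'.image f) : ℝ) ≤ b
        · exact mem_union_left _ (mem_filter.2 ⟨mem_univ _, hcompress⟩)
        · simp only [not_exists, not_and, not_le] at hcompress
          refine mem_union_right _ (mem_biUnion.2 ⟨P f, mem_univ _, mem_filter.2 ⟨mem_univ _, ?_⟩⟩)
          exact (hcompress _ hf.2).trans_le (by exact_mod_cast card_le_card (hXY f))
    _ ≤ _ := (card_union_le _ _).trans (Nat.add_le_add_left card_biUnion_le _)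

lemma prod_Icc_div_pow_le_prod_add {d n m : ℕ} (c : ℕ → ℝ) (hc : ∀ j, 0 ≤ c j) :
    (∏ j ∈ Icc 1 m, ((d : ℝ) + 1) * j) / (n : ℝ) ^ m
      ≤ ∏ j ∈ Icc 1 m, (((d : ℝ) + 1) * j / n + c j) := by
  have hpow : (n : ℝ) ^ m = ∏ _j ∈ Icc 1 m, (n : ℝ) := by simp
  rw [hpow, ← prod_div_distrib]
  exact prod_le_prod (fun j _ => by positivity) fun j _ => le_add_of_nonneg_right (hc j)

/-- The constraints `v ⬝ᵥ f = γ`, `(v, γ) ∈ S`, on `f : 𝔽 → 𝔽`. -/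
abbrev AffineSystem (𝔽 : Type*) := List ((𝔽 → 𝔽) × 𝔽)

namespace AffineSystem

variable {𝔽 : Type*} [Field 𝔽] [Fintype 𝔽] [DecidableEq 𝔽]

def solutions (S : AffineSystem 𝔽) : Finset (𝔽 → 𝔽) :=
  {f | ∀ p ∈ S, p.1 ⬝ᵥ f = p.2}

def constraintSpan (S : AffineSystem 𝔽) : Submodule 𝔽 (𝔽 → 𝔽) :=
  Submodule.span 𝔽 ((S.map Prod.fst).toFinset : Set (𝔽 → 𝔽))

open Classical in
noncomputable def determinedCoords (S : AffineSystem 𝔽) : Finset 𝔽 :=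
  {x | Pi.single x 1 ∈ constraintSpan S}

variable {S : AffineSystem 𝔽} {f g : 𝔽 → 𝔽}

lemma mem_solutions : f ∈ solutions S ↔ ∀ p ∈ S, p.1 ⬝ᵥ f = p.2 := by
  simp [solutions]

lemma mem_determinedCoords {x : 𝔽} :
    x ∈ determinedCoords S ↔ Pi.single x 1 ∈ constraintSpan S := by
  simp [determinedCoords]

lemma solutions_nil : solutions ([] : AffineSystem 𝔽) = univ := by
  ext f; simp [mem_solutions]

lemma solutions_append_singleton (v : 𝔽 → 𝔽) (γ : 𝔽) :
    solutions (S ++ [(v, γ)]) = {f ∈ solutions S | v ⬝ᵥ f = γ} := by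
  ext f
  simp [mem_solutions, or_imp, forall_and]

lemma constraintSpan_append_singleton (v : 𝔽 → 𝔽) (γ : 𝔽) :
    constraintSpan (S ++ [(v, γ)]) = (𝔽 ∙ v) ⊔ constraintSpan S := by
  rw [constraintSpan, constraintSpan, ← Submodule.span_insert]
  congr 1
  ext w
  simp

lemma dotProduct_eq_of_mem_constraintSpan {v : 𝔽 → 𝔽} (hv : v ∈ constraintSpan S)
    (hf : f ∈ solutions S) (hg : g ∈ solutions S) : v ⬝ᵥ f = v ⬝ᵥ g := by
  induction hv using Submodule.span_induction with
  | mem w hw =>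
    obtain ⟨p, hp, rfl⟩ := List.mem_map.1 (List.mem_toFinset.1 hw)
    rw [mem_solutions.1 hf p hp, mem_solutions.1 hg p hp]
  | zero => simp
  | add w u _ _ hw hu => simp only [add_dotProduct, hw, hu]
  | smul c w _ hw => simp only [smul_dotProduct, hw]

lemma apply_eq_of_mem_determinedCoords {x : 𝔽} (hx : x ∈ determinedCoords S)
    (hf : f ∈ solutions S) (hg : g ∈ solutions S) : f x = g x := by
  simpa using dotProduct_eq_of_mem_constraintSpan (mem_determinedCoords.1 hx) hf hg

lemma card_determinedCoords_le (S : AffineSystem 𝔽) :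
    #(determinedCoords S) ≤ S.length := by
  have hind : LinearIndependent 𝔽 fun x : determinedCoords S => (Pi.single (x : 𝔽) 1 : 𝔽 → 𝔽) :=
    (Pi.linearIndependent_single_one 𝔽 𝔽).comp _ Subtype.val_injective
  calc #(determinedCoords S)
      = Module.finrank 𝔽 (Submodule.span 𝔽 (Set.range fun x : determinedCoords S =>
          (Pi.single (x : 𝔽) 1 : 𝔽 → 𝔽))) := by
        rw [finrank_span_eq_card hind, Fintype.card_coe]
    _ ≤ Module.finrank 𝔽 (constraintSpan S) := by
        refine Submodule.finrank_mono (Submodule.span_le.2 ?_)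
        rintro _ ⟨x, rfl⟩
        exact mem_determinedCoords.1 x.2
    _ ≤ (S.map Prod.fst).toFinset.card := finrank_span_finset_le_card _
    _ ≤ S.length := (List.toFinset_card_le _).trans (List.length_map _).le

lemma card_filter_solutions_eq_sum (v : 𝔽 → 𝔽) (P : (𝔽 → 𝔽) → Prop) [DecidablePred P] :
    #{f ∈ solutions S | P f} = ∑ γ, #{f ∈ solutions (S ++ [(v, γ)]) | P f} := by
  rw [card_eq_sum_card_fiberwise (f := (v ⬝ᵥ ·)) (t := univ) fun _ _ => mem_univ _]
  refine sum_congr rfl fun γ _ => ?_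
  rw [solutions_append_singleton, filter_filter, filter_filter]
  simp only [and_comm]

lemma exists_dotProduct_eq_one_of_notMem {v : 𝔽 → 𝔽} (hv : v ∉ constraintSpan S) :
    ∃ h : 𝔽 → 𝔽, (∀ w ∈ constraintSpan S, w ⬝ᵥ h = 0) ∧ v ⬝ᵥ h = 1 := by
  obtain ⟨φ, hφv, hφS⟩ := Submodule.exists_dual_map_eq_bot_of_notMem hv inferInstance
  have hφ : ∀ w, w ⬝ᵥ (dotProductEquiv 𝔽 𝔽).symm φ = φ w := fun w => by
    rw [dotProduct_comm, ← dotProductEquiv_apply_apply, LinearEquiv.apply_symm_apply]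
  refine ⟨(φ v)⁻¹ • (dotProductEquiv 𝔽 𝔽).symm φ, fun w hw => ?_, ?_⟩
  · rw [dotProduct_smul, hφ, LinearMap.mem_ker.1 (LinearMap.le_ker_iff_map.2 hφS hw), smul_zero]
  · rw [dotProduct_smul, hφ, smul_eq_mul, inv_mul_cancel₀ hφv]

/-- The fibres of `v ⬝ᵥ ·` on `solutions S` are translates of each other by a vector
orthogonal to `S` on which `v` is `1`. -/
lemma card_mul_card_solutions_append {v : 𝔽 → 𝔽} (hv : v ∉ constraintSpan S) (γ : 𝔽) :
    Fintype.card 𝔽 * #(solutions (S ++ [(v, γ)])) = #(solutions S) := by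
  obtain ⟨h, hS, hv⟩ := exists_dotProduct_eq_one_of_notMem hv
  have shift : ∀ γ₁ γ₂, Set.MapsTo (· + (γ₂ - γ₁) • h)
      (solutions (S ++ [(v, γ₁)]) : Set _) (solutions (S ++ [(v, γ₂)])) := by
    intro γ₁ γ₂ f hf
    simp only [coe_filter, solutions_append_singleton, Set.mem_ofPred_eq, mem_solutions] at hf ⊢
    refine ⟨fun p hp => ?_, ?_⟩
    · rw [dotProduct_add, dotProduct_smul, hf.1 p hp,
        hS p.1 (Submodule.subset_span (by simpa using ⟨p.2, hp⟩)), smul_zero, add_zero]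
    · rw [dotProduct_add, dotProduct_smul, hf.2, hv, smul_eq_mul, mul_one, add_sub_cancel]
  have hfiber : ∀ γ', #(solutions (S ++ [(v, γ')])) = #(solutions (S ++ [(v, γ)])) := fun γ' =>
    card_nbij' _ _ (shift γ' γ) (shift γ γ') (fun f _ => by simp [add_assoc, ← add_smul])
      (fun f _ => by simp [add_assoc, ← add_smul])
  simpa [hfiber] using (card_filter_solutions_eq_sum (S := S) v fun _ => True).symm

lemma determinedCoords_append_singleton (v : 𝔽 → 𝔽) (γ γ' : 𝔽) :
    determinedCoords (S ++ [(v, γ)]) = determinedCoords (S ++ [(v, γ')]) := by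
  ext x
  rw [mem_determinedCoords, mem_determinedCoords, constraintSpan_append_singleton,
    constraintSpan_append_singleton]

lemma determinedCoords_subset_append (v : 𝔽 → 𝔽) (γ : 𝔽) :
    determinedCoords S ⊆ determinedCoords (S ++ [(v, γ)]) := fun x hx => by
  rw [mem_determinedCoords, constraintSpan_append_singleton] at *
  exact Submodule.mem_sup_right hx

/-- Fixing the value `γ` of a new constraint `v` makes a coordinate `x` newly determined with
value `y` for at most one `γ`: `Pi.single x 1 = c • v + z` with `c ≠ 0` and `z` in the span of
`S`, so `f x = c * γ + z ⬝ᵥ f` with `z ⬝ᵥ f` fixed by `S`. -/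
lemma card_add_card_determinedCoords_le (v : 𝔽 → 𝔽) (y : 𝔽)
    (hS : ∀ f ∈ solutions S, ∀ x ∈ determinedCoords S, f x ≠ y) (Γ : Finset 𝔽)
    (hΓ : ∀ γ ∈ Γ, ∃ f ∈ solutions (S ++ [(v, γ)]),
      ∃ x ∈ determinedCoords (S ++ [(v, γ)]), f x = y) :
    #Γ + #(determinedCoords S) ≤ #(determinedCoords (S ++ [(v, 0)])) := by
  rw [← card_sdiff_add_card_eq_card (determinedCoords_subset_append v 0), add_le_add_iff_right]
  refine card_le_card_of_forall_subsingleton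
    (fun γ x => ∃ f ∈ solutions (S ++ [(v, γ)]), f x = y) (fun γ hγ => ?_) ?_
  · obtain ⟨f, hf, x, hx, hfx⟩ := hΓ γ hγ
    refine ⟨x, mem_sdiff.2 ⟨determinedCoords_append_singleton v γ 0 ▸ hx, fun hxS => ?_⟩,
      f, hf, hfx⟩
    rw [solutions_append_singleton] at hf
    exact hS f (mem_filter.1 hf).1 x hxS hfx
  · intro x hx γ₁ ⟨_, f₁, hf₁, hy₁⟩ γ₂ ⟨_, f₂, hf₂, hy₂⟩
    obtain ⟨hx', hxS⟩ := mem_sdiff.1 hx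
    rw [mem_determinedCoords, constraintSpan_append_singleton] at hx'
    obtain ⟨_, hcv, z, hz, hsum⟩ := Submodule.mem_sup.1 hx'
    obtain ⟨c, rfl⟩ := Submodule.mem_span_singleton.1 hcv
    have hc : c ≠ 0 := by
      rintro rfl
      rw [zero_smul, zero_add] at hsum
      exact hxS (mem_determinedCoords.2 (hsum ▸ hz))
    rw [solutions_append_singleton, mem_filter] at hf₁ hf₂
    have hval : ∀ f, f x = c * (v ⬝ᵥ f) + z ⬝ᵥ f := fun f => by
      rw [← smul_eq_mul, ← smul_dotProduct, ← add_dotProduct, hsum, single_dotProduct, one_mul]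
    have h₁ := hval f₁
    have h₂ := hval f₂
    rw [hy₁, hf₁.2, dotProduct_eq_of_mem_constraintSpan hz hf₁.1 hf₂.1] at h₁
    rw [hy₂, hf₂.2] at h₂
    exact mul_left_cancel₀ hc (add_right_cancel (h₁.symm.trans h₂))

end AffineSystem

inductive AffineDecisionTree (𝔽 : Type*) : ℕ → Type _
  | leaf (x : 𝔽) : AffineDecisionTree 𝔽 0
  | node {h : ℕ} (v : 𝔽 → 𝔽) (child : 𝔽 → AffineDecisionTree 𝔽 h) :
      AffineDecisionTree 𝔽 (h + 1)

namespace AffineDecisionTree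

section Eval

variable {𝔽 : Type*} [Semiring 𝔽] [Fintype 𝔽]

def eval : {h : ℕ} → AffineDecisionTree 𝔽 h → (𝔽 → 𝔽) → 𝔽
  | _, leaf x, _ => x
  | _, node v child, f => (child (v ⬝ᵥ f)).eval f

/-- The tree asking the questions `α k`, `d - r ≤ k < d`, of a decoder given in prefix form,
the answers to the earlier questions being `g` (meaningful for `r ≤ d` only). -/
def ofPrefix {d : ℕ} (α : Fin d → (Fin d → 𝔽) → 𝔽 → 𝔽) (o : (Fin d → 𝔽) → 𝔽) :
    (r : ℕ) → (Fin d → 𝔽) → AffineDecisionTree 𝔽 r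
  | 0, g => leaf (o g)
  | r + 1, g =>
    node (if hk : d - (r + 1) < d then α ⟨d - (r + 1), hk⟩ g else 0) fun γ =>
      ofPrefix α o r fun i => if (i : ℕ) = d - (r + 1) then γ else g i

lemma eval_ofPrefix {d : ℕ} {α : Fin d → (Fin d → 𝔽) → 𝔽 → 𝔽} (o : (Fin d → 𝔽) → 𝔽)
    (hα : ∀ (k : Fin d) (g g' : Fin d → 𝔽),
      (∀ j : Fin d, (j : ℕ) < k → g j = g' j) → α k g = α k g')
    {f : 𝔽 → 𝔽} {g : Fin d → 𝔽} (hg : ∀ k, g k = α k g ⬝ᵥ f) :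
    ∀ r ≤ d, ∀ g' : Fin d → 𝔽, (∀ i : Fin d, (i : ℕ) < d - r → g' i = g i) →
      (ofPrefix α o r g').eval f = o g := by
  intro r
  induction r with
  | zero =>
    intro _ g' hg'
    simp only [ofPrefix, eval]
    congr 1
    exact funext fun i => hg' i (by omega)
  | succ r ih =>
    intro hr g' hg'
    have hk : d - (r + 1) < d := by omega
    have hαk : α ⟨d - (r + 1), hk⟩ g' = α ⟨d - (r + 1), hk⟩ g := hα _ _ _ hg'
    simp only [ofPrefix, eval, dif_pos hk, hαk, ← hg]
    refine ih (by omega) _ fun i hi => ?_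
    split_ifs with hi'
    · exact congrArg g (Fin.ext hi').symm
    · exact hg' i (by omega)

lemma exists_eval_eq_of_prefix {d : ℕ} {F : (𝔽 → 𝔽) → 𝔽} (α : Fin d → (Fin d → 𝔽) → 𝔽 → 𝔽)
    (o : (Fin d → 𝔽) → 𝔽)
    (hα : ∀ (k : Fin d) (g g' : Fin d → 𝔽),
      (∀ j : Fin d, (j : ℕ) < k → g j = g' j) → α k g = α k g')
    (hF : ∀ f, ∃ g : Fin d → 𝔽, (∀ k, g k = α k g ⬝ᵥ f) ∧ F f = o g) :
    ∃ T : AffineDecisionTree 𝔽 d, ∀ f, F f = T.eval f := by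
  refine ⟨ofPrefix α o d 0, fun f => ?_⟩
  obtain ⟨g, hg, hFg⟩ := hF f
  rw [hFg, eval_ofPrefix o hα hg d le_rfl 0 fun _ hi => by omega]

end Eval

section Counting

open AffineSystem

variable {𝔽 : Type*} [Field 𝔽] [Fintype 𝔽] [DecidableEq 𝔽]

lemma filter_eval_node_eq {h : ℕ} (S : AffineSystem 𝔽) (v : 𝔽 → 𝔽)
    (child : 𝔽 → AffineDecisionTree 𝔽 h) (γ : 𝔽) (P : 𝔽 → (𝔽 → 𝔽) → Prop)
    [∀ x, DecidablePred (P x)] :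
    {f ∈ solutions (S ++ [(v, γ)]) | P ((node v child).eval f) f}
      = {f ∈ solutions (S ++ [(v, γ)]) | P ((child γ).eval f) f} := by
  refine filter_congr fun f hf => ?_
  rw [solutions_append_singleton, mem_filter] at hf
  rw [eval, hf.2]

lemma card_mul_card_filter_eval_node_add_le {h : ℕ} {S : AffineSystem 𝔽} {v : 𝔽 → 𝔽}
    (hv : v ∉ constraintSpan S) (child : 𝔽 → AffineDecisionTree 𝔽 h) (y : 𝔽)
    (hS : ∀ f ∈ solutions S, ∀ x ∈ determinedCoords S, f x ≠ y)
    (ih : ∀ γ (S' : AffineSystem 𝔽),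
      (∀ f ∈ solutions S', ∀ x ∈ determinedCoords S', f x ≠ y) →
      Fintype.card 𝔽 * #{f ∈ solutions S' | f ((child γ).eval f) = y}
        + #(solutions S') * #(determinedCoords S') ≤ #(solutions S') * (S'.length + h + 1)) :
    Fintype.card 𝔽 * #{f ∈ solutions S | f ((node v child).eval f) = y}
      + #(solutions S) * #(determinedCoords S) ≤ #(solutions S) * (S.length + (h + 1) + 1) := by
  have hX' : #(determinedCoords (S ++ [(v, 0)])) ≤ S.length + 1 :=
    (card_determinedCoords_le _).trans (by simp)
  classical
  set bad : Finset 𝔽 :=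
    {γ | ∃ f ∈ solutions (S ++ [(v, γ)]), ∃ x ∈ determinedCoords (S ++ [(v, γ)]), f x = y}
  have hbad := card_add_card_determinedCoords_le v y hS bad fun γ hγ => (mem_filter.1 hγ).2
  have hstep : ∀ γ, Fintype.card 𝔽 * #{f ∈ solutions (S ++ [(v, γ)]) | f ((child γ).eval f) = y}
      + #(solutions (S ++ [(v, γ)])) * #(determinedCoords (S ++ [(v, 0)]))
      ≤ #(solutions (S ++ [(v, γ)])) * (S.length + h + 2)
        + if γ ∈ bad then #(solutions S) else 0 := by
    intro γ
    split_ifs with hγ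
    · have hF := card_le_card (filter_subset (fun f => f ((child γ).eval f) = y)
        (solutions (S ++ [(v, γ)])))
      have hA := card_mul_card_solutions_append hv γ
      have := Nat.mul_le_mul_left (Fintype.card 𝔽) hF
      have := Nat.mul_le_mul_left #(solutions (S ++ [(v, γ)]))
        (hX'.trans (by omega : S.length + 1 ≤ S.length + h + 2))
      linarith
    · have hγ' : ∀ f ∈ solutions (S ++ [(v, γ)]), ∀ x ∈ determinedCoords (S ++ [(v, γ)]),
          f x ≠ y := by simpa [bad] using hγ
      have := ih γ _ hγ'
      rw [determinedCoords_append_singleton v γ 0, List.length_append,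
        List.length_singleton] at this
      linarith
  have hsol : ∑ γ, #(solutions (S ++ [(v, γ)])) = #(solutions S) := by
    simpa using (card_filter_solutions_eq_sum (S := S) v fun _ => True).symm
  have hsum := sum_le_sum fun γ (_ : γ ∈ univ) => hstep γ
  simp only [sum_add_distrib, ← mul_sum, ← sum_mul, hsol, sum_ite_mem, univ_inter,
    sum_const, smul_eq_mul] at hsum
  rw [card_filter_solutions_eq_sum v, mul_sum, sum_congr rfl fun γ _ => by
    rw [filter_eval_node_eq S v child γ fun x f => f x = y], ← mul_sum]
  have := Nat.mul_le_mul_left #(solutions S) hbad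
  rw [Nat.mul_add] at this
  linarith

/-- The potential `#(determinedCoords S)` pays for the targets hit at determined coordinates:
an undetermined output equals `y` with probability `1 / card 𝔽`, and a coordinate newly
determined by a question equals `y` for at most one of its `card 𝔽` equally likely answers. -/
lemma card_mul_card_filter_eval_add_le {h : ℕ} (T : AffineDecisionTree 𝔽 h) (S : AffineSystem 𝔽)
    (y : 𝔽) (hS : ∀ f ∈ solutions S, ∀ x ∈ determinedCoords S, f x ≠ y) :
    Fintype.card 𝔽 * #{f ∈ solutions S | f (T.eval f) = y}
      + #(solutions S) * #(determinedCoords S) ≤ #(solutions S) * (S.length + h + 1) := by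
  induction T generalizing S with
  | leaf x =>
    have hXS := card_determinedCoords_le S
    by_cases hx : x ∈ determinedCoords S
    · have : {f ∈ solutions S | f ((leaf x).eval f) = y} = ∅ :=
        filter_eq_empty_iff.2 fun f hf => hS f hf x hx
      rw [this, card_empty, mul_zero, zero_add]
      exact Nat.mul_le_mul_left _ (by omega)
    · have hfilter : {f ∈ solutions S | f ((leaf x).eval f) = y}
          = solutions (S ++ [(Pi.single x 1, y)]) := by
        rw [solutions_append_singleton]
        exact filter_congr fun f _ => by rw [eval, single_dotProduct, one_mul]
      have := card_mul_card_solutions_append (mt mem_determinedCoords.2 hx) y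
      rw [hfilter, this]
      linarith [Nat.mul_le_mul_left #(solutions S) hXS]
  | @node h v child ih =>
    by_cases hv : v ∈ constraintSpan S
    · rcases (solutions S).eq_empty_or_nonempty with hempty | ⟨f₀, hf₀⟩
      · simp [hempty]
      have hfilter : {f ∈ solutions S | f ((node v child).eval f) = y}
          = {f ∈ solutions S | f ((child (v ⬝ᵥ f₀)).eval f) = y} :=
        filter_congr fun f hf => by rw [eval, dotProduct_eq_of_mem_constraintSpan hv hf hf₀]
      rw [hfilter]
      exact (ih (v ⬝ᵥ f₀) S hS).trans (Nat.mul_le_mul_left _ (by omega))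
    · exact card_mul_card_filter_eval_node_add_le hv child y hS fun γ S' => ih γ S'

lemma sum_card_filter_eval_eq_le {h : ℕ} (T : 𝔽 → AffineDecisionTree 𝔽 h)
    (S : AffineSystem 𝔽) :
    ∑ y, #{f ∈ solutions S | f ((T y).eval f) = y} ≤ #(solutions S) * (S.length + h + 1) := by
  rcases (solutions S).eq_empty_or_nonempty with hempty | ⟨f₀, hf₀⟩
  · simp [hempty]
  have hn : 0 < Fintype.card 𝔽 := Fintype.card_pos
  set A := #(solutions S)
  set Y := (determinedCoords S).image f₀
  have hstep : ∀ y, Fintype.card 𝔽 * #{f ∈ solutions S | f ((T y).eval f) = y}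
      + A * #(determinedCoords S)
      ≤ A * (S.length + h + 1) + if y ∈ Y then Fintype.card 𝔽 * A else 0 := by
    intro y
    split_ifs with hy
    · have := Nat.mul_le_mul_left (Fintype.card 𝔽) (card_le_card (filter_subset
        (fun f => f ((T y).eval f) = y) (solutions S)))
      have := Nat.mul_le_mul_left A ((card_determinedCoords_le S).trans (by omega :
        S.length ≤ S.length + h + 1))
      linarith
    · refine add_zero (A * _) ▸ card_mul_card_filter_eval_add_le (T y) S y
        fun f hf x hx hfx => hy ?_
      rw [apply_eq_of_mem_determinedCoords hx hf hf₀] at hfx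
      exact mem_image.2 ⟨x, hx, hfx⟩
  have hsum := sum_le_sum fun y (_ : y ∈ univ) => hstep y
  simp only [sum_add_distrib, ← mul_sum, sum_const, card_univ, smul_eq_mul, sum_ite_mem,
    univ_inter] at hsum
  have hY := Nat.mul_le_mul_right (Fintype.card 𝔽 * A) (card_image_le (s := determinedCoords S)
    (f := f₀))
  refine Nat.le_of_mul_le_mul_left ?_ hn
  nlinarith

/-- Conditioning on `T` inverting `y` splits `solutions S` along the root-to-leaf paths of `T`
into solution sets of systems with `|S| + h + 1` constraints. -/
lemma sum_card_filter_eval_eq_and_le {ι : Type*} [Fintype ι] (A : ι → (𝔽 → 𝔽) → Prop)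
    [∀ i, DecidablePred (A i)] (K L : ℕ)
    (hA : ∀ S' : AffineSystem 𝔽, S'.length = L →
      ∑ i, #{f ∈ solutions S' | A i f} ≤ #(solutions S') * K)
    {h : ℕ} (T : AffineDecisionTree 𝔽 h) (S : AffineSystem 𝔽) (hS : S.length + h + 1 = L)
    (y : 𝔽) :
    ∑ i, #{f ∈ solutions S | f (T.eval f) = y ∧ A i f}
      ≤ #{f ∈ solutions S | f (T.eval f) = y} * K := by
  induction T generalizing S with
  | leaf x =>
    have hfilter : ∀ P : (𝔽 → 𝔽) → Prop, [DecidablePred P] →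
        {f ∈ solutions S | f ((leaf x).eval f) = y ∧ P f}
          = {f ∈ solutions (S ++ [(Pi.single x 1, y)]) | P f} := fun P _ => by
      rw [solutions_append_singleton, filter_filter]
      exact filter_congr fun f _ => by rw [eval, single_dotProduct, one_mul]
    have hfilter₀ : {f ∈ solutions S | f ((leaf x).eval f) = y}
        = solutions (S ++ [(Pi.single x 1, y)]) := by
      simpa using hfilter fun _ => True
    simpa only [hfilter, hfilter₀] using hA (S ++ [(Pi.single x 1, y)]) (by simpa using hS)
  | @node h v child ih =>
    have hsplit : ∀ P : 𝔽 → (𝔽 → 𝔽) → Prop, [∀ x, DecidablePred (P x)] →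
        #{f ∈ solutions S | P ((node v child).eval f) f}
          = ∑ γ, #{f ∈ solutions (S ++ [(v, γ)]) | P ((child γ).eval f) f} := fun P _ => by
      rw [card_filter_solutions_eq_sum v]
      exact sum_congr rfl fun γ _ => by rw [filter_eval_node_eq]
    rw [sum_congr rfl fun i _ => hsplit fun x f => f x = y ∧ A i f, hsplit fun x f => f x = y,
      sum_comm, sum_mul]
    exact sum_le_sum fun γ _ => ih γ _ (by simp; omega)

lemma sum_card_filter_forall_eval_eq_le {d : ℕ} (T : 𝔽 → AffineDecisionTree 𝔽 d) (m : ℕ)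
    (S : AffineSystem 𝔽) :
    ∑ ys : Fin m → 𝔽, #{f ∈ solutions S | ∀ i, f ((T (ys i)).eval f) = ys i}
      ≤ #(solutions S) * ∏ j ∈ range m, (S.length + d + 1 + (d + 1) * j) := by
  induction m generalizing S with
  | zero => simp
  | succ m ih =>
    have hcons : ∑ ys : Fin (m + 1) → 𝔽, #{f ∈ solutions S | ∀ i, f ((T (ys i)).eval f) = ys i}
        = ∑ y, ∑ ys : Fin m → 𝔽, #{f ∈ solutions S |
            f ((T y).eval f) = y ∧ ∀ i, f ((T (ys i)).eval f) = ys i} := by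
      rw [← (Fin.consEquiv fun _ => 𝔽).sum_comp, Fintype.sum_prod_type]
      simp [Fin.consEquiv, Fin.forall_fin_succ]
    have hstep : ∀ y, ∑ ys : Fin m → 𝔽, #{f ∈ solutions S |
          f ((T y).eval f) = y ∧ ∀ i, f ((T (ys i)).eval f) = ys i}
        ≤ #{f ∈ solutions S | f ((T y).eval f) = y}
          * ∏ j ∈ range m, ((S.length + d + 1) + d + 1 + (d + 1) * j) := fun y =>
      sum_card_filter_eval_eq_and_le _ _ _ (fun S' hS' => hS' ▸ ih S') (T y) S rfl y
    calc _ ≤ ∑ y, #{f ∈ solutions S | f ((T y).eval f) = y}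
          * ∏ j ∈ range m, ((S.length + d + 1) + d + 1 + (d + 1) * j) :=
          hcons ▸ sum_le_sum fun y _ => hstep y
      _ ≤ #(solutions S) * (S.length + d + 1)
          * ∏ j ∈ range m, ((S.length + d + 1) + d + 1 + (d + 1) * j) := by
          rw [← sum_mul]
          exact Nat.mul_le_mul_right _ (sum_card_filter_eval_eq_le T S)
      _ = #(solutions S) * ∏ j ∈ range (m + 1), (S.length + d + 1 + (d + 1) * j) := by
          rw [prod_range_succ', mul_zero, add_zero, mul_assoc, mul_comm (S.length + d + 1)]
          congr 2
          refine prod_congr rfl fun j _ => by ring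

lemma sum_card_filter_eval_eq_pow_le {d : ℕ} (T : 𝔽 → AffineDecisionTree 𝔽 d) (m : ℕ) :
    ∑ f : 𝔽 → 𝔽, #{y | f ((T y).eval f) = y} ^ m
      ≤ Fintype.card 𝔽 ^ Fintype.card 𝔽 * ∏ j ∈ Icc 1 m, (d + 1) * j := by
  have hpow : ∀ f : 𝔽 → 𝔽, #{y | f ((T y).eval f) = y} ^ m
      = #{ys : Fin m → 𝔽 | ∀ i, f ((T (ys i)).eval f) = ys i} := fun f => by
    rw [← Fintype.card_piFinset_const]
    congr 1
    ext ys
    simp [Fintype.mem_piFinset]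
  calc ∑ f : 𝔽 → 𝔽, #{y | f ((T y).eval f) = y} ^ m
      = ∑ ys : Fin m → 𝔽, #{f : 𝔽 → 𝔽 | ∀ i, f ((T (ys i)).eval f) = ys i} := by
        simp only [hpow]
        exact sum_card_bipartiteAbove_eq_sum_card_bipartiteBelow _
    _ ≤ Fintype.card 𝔽 ^ Fintype.card 𝔽 * ∏ j ∈ range m, (0 + d + 1 + (d + 1) * j) := by
        simpa [solutions_nil] using sum_card_filter_forall_eval_eq_le T m []
    _ = Fintype.card 𝔽 ^ Fintype.card 𝔽 * ∏ j ∈ Icc 1 m, (d + 1) * j := by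
        rw [← Ico_add_one_right_eq_Icc, prod_Ico_eq_prod_range, Nat.add_sub_cancel]
        exact congrArg _ (prod_congr rfl fun j _ => by ring)

lemma card_filter_le_add_mul_prod {ι : Type*} [Fintype ι] {d : ℕ} (P : (𝔽 → 𝔽) → ι)
    (T : ι → 𝔽 → AffineDecisionTree 𝔽 d) (a : ℝ) {δ : ℝ} (hδ : 0 < δ) (m : ℕ) :
    (#{f : 𝔽 → 𝔽 | a ≤ #{x | f ((T (P f) (f x)).eval f) = f x}} : ℝ)
      ≤ #{f : 𝔽 → 𝔽 | ∃ X : Finset 𝔽, a ≤ #X ∧ (#(X.image f) : ℝ) ≤ δ * Fintype.card 𝔽}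
        + Fintype.card ι * ((δ ^ m)⁻¹
          * ((∏ j ∈ Icc 1 m, ((d : ℝ) + 1) * j) / (Fintype.card 𝔽 : ℝ) ^ m)
          * Fintype.card 𝔽 ^ Fintype.card 𝔽) := by
  have hunion := card_filter_le_card_filter_add_sum
    (fun f => {x | f ((T (P f) (f x)).eval f) = f x}) (fun i f => {y | f ((T i y).eval f) = y}) P
    (fun f => by simp [image_subset_iff]) a (δ * Fintype.card 𝔽)
  have htail : ∀ i, (#{f : 𝔽 → 𝔽 | δ * Fintype.card 𝔽 < #{y | f ((T i y).eval f) = y}} : ℝ)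
      ≤ (δ ^ m)⁻¹ * ((∏ j ∈ Icc 1 m, ((d : ℝ) + 1) * j) / (Fintype.card 𝔽 : ℝ) ^ m)
        * Fintype.card 𝔽 ^ Fintype.card 𝔽 := fun i => by
    have hmarkov : (δ * Fintype.card 𝔽) ^ m
        * (#{f : 𝔽 → 𝔽 | δ * Fintype.card 𝔽 < #{y | f ((T i y).eval f) = y}} : ℝ)
        ≤ (Fintype.card 𝔽 : ℝ) ^ Fintype.card 𝔽 * ∏ j ∈ Icc 1 m, ((d : ℝ) + 1) * j :=
      (pow_mul_card_filter_lt_le_sum_pow _ _ (by positivity) m).trans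
        (by exact_mod_cast sum_card_filter_eval_eq_pow_le (T i) m)
    rw [← le_div_iff₀' (by positivity)] at hmarkov
    refine hmarkov.trans_eq ?_
    rw [mul_pow]
    field_simp
  refine ((Nat.cast_le (α := ℝ)).2 hunion).trans ?_
  push_cast
  refine add_le_add le_rfl ((sum_le_sum fun i _ => htail i).trans_eq ?_)
  rw [sum_const, card_univ, nsmul_eq_mul]

end Counting

end AffineDecisionTree

open AffineDecisionTree

theorem stmt_13_general {𝔽 : Type} [Field 𝔽] [Fintype 𝔽] [DecidableEq 𝔽]
    (n s q d : ℕ) (hn : Fintype.card 𝔽 = n)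
    (P : (𝔽 → 𝔽) → (Fin s → Bool))
    (Q : 𝔽 → (Fin s → Bool) → (Fin q → 𝔽))
    (D : 𝔽 → (Fin s → Bool) → (Fin q → 𝔽) → 𝔽)
    (htree : ∀ (y : 𝔽) (a : Fin s → Bool), ∃ (α : Fin d → (Fin d → 𝔽) → (𝔽 → 𝔽))
        (o : (Fin d → 𝔽) → 𝔽),
      (∀ (k : Fin d) (gs : Fin d → 𝔽) (x : 𝔽), α k gs x ≠ 0 → ∃ k' : Fin q, Q y a k' = x) ∧
      (∀ (k : Fin d) (gs gs' : Fin d → 𝔽),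
        (∀ j : Fin d, (j : ℕ) < (k : ℕ) → gs j = gs' j) → α k gs = α k gs') ∧
      (∀ f : 𝔽 → 𝔽, ∃ gvec : Fin d → 𝔽,
        (∀ k : Fin d, gvec k = ∑ x : 𝔽, α k gvec x * f x) ∧
        D y a (fun k => f (Q y a k)) = o gvec))
    (τ δ : ℝ) (hδ0 : 0 < δ)
    (m : ℕ) :
    (Nat.card {f : 𝔽 → 𝔽 //
        τ ≤ (Nat.card {x : 𝔽 //
            f (D (f x) (P f) (fun k => f (Q (f x) (P f) k))) = f x} : ℝ) / n} : ℝ)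
      / (Nat.card (𝔽 → 𝔽)) ≤
    (Nat.card {f : 𝔽 → 𝔽 // ∃ X : Finset 𝔽,
        τ * n ≤ (X.card : ℝ) ∧ ((X.image f).card : ℝ) ≤ δ * n} : ℝ)
      / (Nat.card (𝔽 → 𝔽))
    + (2 : ℝ) ^ s * (δ ^ m)⁻¹ *
      ∏ j ∈ Finset.Icc 1 m,
        (((d : ℝ) + 1) * (j : ℝ) / n
          + max (((q : ℝ) / n) ^ ((1 : ℝ) / 4))
              (2 * ((d : ℝ) + 1) * (j : ℝ) * Real.logb 2 n
                / ((n : ℝ) * Real.logb 2 ((n : ℝ) / q)))) := by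
  have hdecoder : ∀ a y, ∃ T : AffineDecisionTree 𝔽 d,
      ∀ f, D y a (fun k => f (Q y a k)) = T.eval f := fun a y => by
    obtain ⟨α, o, -, hα, hD⟩ := htree y a
    exact exists_eval_eq_of_prefix α o hα hD
  choose T hT using hdecoder
  subst hn
  have hn : (0 : ℝ) < Fintype.card 𝔽 := by exact_mod_cast Fintype.card_pos
  have hN : (0 : ℝ) < Fintype.card 𝔽 ^ Fintype.card 𝔽 := by positivity
  simp only [Nat.card_eq_fintype_card, Fintype.card_subtype, Fintype.card_fun, le_div_iff₀ hn, hT]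
  push_cast
  rw [div_add' _ _ _ hN.ne', div_le_div_iff_of_pos_right hN]
  refine (card_filter_le_add_mul_prod P T _ hδ0 m).trans (add_le_add le_rfl ?_)
  rw [Fintype.card_fun, Fintype.card_bool, Fintype.card_fin]
  push_cast
  rw [← mul_assoc, ← mul_assoc]
  gcongr
  exact prod_Icc_div_pow_le_prod_add _ fun j => le_max_of_le_left (by positivity)

/-- Let `𝔽` be a finite field with exactly `n` elements identified with
`[n]`, and `Inv = (P,Q,D)` an `s`-advice, `q`-query non-adaptive inverter with a `d`-depth
affine decision tree decoder (`1 ≤ q ≤ n/16`). Then for every `τ ∈ [0,1]`, `δ ∈ (0,1]` and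
natural `m ≤ n log₂(n/q) / (4(d+1) log₂ n)`:
`Pr_f[Pr_x[Inv(f(x); f) ∈ f⁻¹(f(x))] ≥ τ]
  ≤ α_{τ,δ} + 2^s δ^{-m}
      ∏_{j=1}^m ((d+1)j/n + max{(q/n)^{1/4}, 2(d+1)j log₂ n / (n log₂(n/q))})`,
where `α_{τ,δ} = Pr_f[∃ X ⊆ [n], |X| ≥ τn ∧ |f(X)| ≤ δn]`. -/
theorem stmt_13 {𝔽 : Type} [Field 𝔽] [Fintype 𝔽] [DecidableEq 𝔽]
    (n s q d : ℕ) (hn : Fintype.card 𝔽 = n) (hq1 : 1 ≤ q) (hqn : (q : ℝ) ≤ (n : ℝ) / 16)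
    (P : (𝔽 → 𝔽) → (Fin s → Bool))
    (Q : 𝔽 → (Fin s → Bool) → (Fin q → 𝔽))
    (D : 𝔽 → (Fin s → Bool) → (Fin q → 𝔽) → 𝔽)
    (htree : ∀ (y : 𝔽) (a : Fin s → Bool), ∃ (α : Fin d → (Fin d → 𝔽) → (𝔽 → 𝔽))
        (o : (Fin d → 𝔽) → 𝔽),
      (∀ (k : Fin d) (gs : Fin d → 𝔽) (x : 𝔽), α k gs x ≠ 0 → ∃ k' : Fin q, Q y a k' = x) ∧
      (∀ (k : Fin d) (gs gs' : Fin d → 𝔽),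
        (∀ j : Fin d, (j : ℕ) < (k : ℕ) → gs j = gs' j) → α k gs = α k gs') ∧
      (∀ f : 𝔽 → 𝔽, ∃ gvec : Fin d → 𝔽,
        (∀ k : Fin d, gvec k = ∑ x : 𝔽, α k gvec x * f x) ∧
        D y a (fun k => f (Q y a k)) = o gvec))
    (τ δ : ℝ) (hτ0 : 0 ≤ τ) (hτ1 : τ ≤ 1) (hδ0 : 0 < δ) (hδ1 : δ ≤ 1)
    (m : ℕ)
    (hm : (m : ℝ) ≤ (n : ℝ) * Real.logb 2 ((n : ℝ) / q)
        / (4 * ((d : ℝ) + 1) * Real.logb 2 n)) :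
    (Nat.card {f : 𝔽 → 𝔽 //
        τ ≤ (Nat.card {x : 𝔽 //
            f (D (f x) (P f) (fun k => f (Q (f x) (P f) k))) = f x} : ℝ) / n} : ℝ)
      / (Nat.card (𝔽 → 𝔽)) ≤
    (Nat.card {f : 𝔽 → 𝔽 // ∃ X : Finset 𝔽,
        τ * n ≤ (X.card : ℝ) ∧ ((X.image f).card : ℝ) ≤ δ * n} : ℝ)
      / (Nat.card (𝔽 → 𝔽))
    + (2 : ℝ) ^ s * (δ ^ m)⁻¹ *
      ∏ j ∈ Finset.Icc 1 m,
        (((d : ℝ) + 1) * (j : ℝ) / n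
          + max (((q : ℝ) / n) ^ ((1 : ℝ) / 4))
              (2 * ((d : ℝ) + 1) * (j : ℝ) * Real.logb 2 n
                / ((n : ℝ) * Real.logb 2 ((n : ℝ) / q)))) :=
  stmt_13_general n s q d hn P Q D htree τ δ hδ0 m
end
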